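/- arXiv:1802.04107 — 2 statements merged into one kernel-verified Lean document; each statement's English description precedes it below -/
import Mathlib

section
/- Let 1 < α ≤ 2, 0 < β ≤ 1, p > 1 with conjugate exponent q (1/p + 1/q = 1), and let m : [0,π] → ℝ be continuous. Define the operator A on the Banach space C([0,π], ℝ) (with the sup norm) by (A y)(t) = (1/Γ(α)) ∫_0^t (t−s)^{α−1} φ_q( (1/Γ(β)) ∫_0^s (s−r)^{β−1} m(r) y(r) dr ) ds. Then A maps C([0,π], ℝ) into itself, A is continuous, and A maps bounded subsets of C([0,π], ℝ) to relatively compact subsets. -/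
open MeasureTheory Set Real

/-- The `p`-Laplacian `φ_p(s) = |s|^{p-2} s` (with real power, so `φ_p 0 = 0`). -/
noncomputable def phiLap (p s : ℝ) : ℝ := |s| ^ (p - 2) * s

namespace SolOp


open scoped NNReal

lemma rpow_add_le_add_rpow {x y pp : ℝ} (hx : 0 ≤ x) (hy : 0 ≤ y) (hp0 : 0 ≤ pp) (hp1 : pp ≤ 1) :
    (x + y) ^ pp ≤ x ^ pp + y ^ pp := by
  have h := NNReal.rpow_add_le_add_rpow x.toNNReal y.toNNReal hp0 hp1
  have hco : ((x.toNNReal + y.toNNReal : ℝ≥0) : ℝ) = x + y := by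
    simp [Real.coe_toNNReal x hx, Real.coe_toNNReal y hy]
  calc (x + y) ^ pp = (((x.toNNReal + y.toNNReal : ℝ≥0) : ℝ)) ^ pp := by rw [hco]
    _ = (((x.toNNReal + y.toNNReal) ^ pp : ℝ≥0) : ℝ) := by rw [NNReal.coe_rpow]
    _ ≤ ((x.toNNReal ^ pp + y.toNNReal ^ pp : ℝ≥0) : ℝ) := by exact_mod_cast h
    _ = x ^ pp + y ^ pp := by
        push_cast [NNReal.coe_rpow, Real.coe_toNNReal x hx, Real.coe_toNNReal y hy]
        ring

lemma holder_mod {K b : ℝ} (hK : 0 ≤ K) (hb : 0 < b) {ε : ℝ} (hε : 0 < ε) :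
    ∃ δ > 0, ∀ d : ℝ, 0 ≤ d → d < δ → K * d ^ b < ε := by
  have hK1 : (0:ℝ) < K + 1 := by linarith
  refine ⟨(ε / (K + 1)) ^ (1 / b), Real.rpow_pos_of_pos (by positivity) _, fun d hd0 hdδ => ?_⟩
  have h2 : ((ε / (K + 1)) ^ (1 / b)) ^ b = ε / (K + 1) := by
    rw [← Real.rpow_mul (by positivity), one_div, inv_mul_cancel₀ hb.ne', Real.rpow_one]
  have h1 : d ^ b ≤ ε / (K + 1) := by
    rw [← h2]; exact Real.rpow_le_rpow hd0 hdδ.le hb.le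
  have h3 : K * d ^ b ≤ K * (ε / (K + 1)) := mul_le_mul_of_nonneg_left h1 hK
  have h4 : K * (ε / (K + 1)) < ε := by
    rw [mul_div_assoc', div_lt_iff₀ hK1]; nlinarith
  linarith

lemma continuousOn_of_holder {f : ℝ → ℝ} {K b : ℝ} (hK : 0 ≤ K) (hb : 0 < b)
    (H : ∀ x ∈ Icc (0:ℝ) π, ∀ y ∈ Icc (0:ℝ) π, x ≤ y → |f y - f x| ≤ K * (y - x) ^ b) :
    ContinuousOn f (Icc (0:ℝ) π) := by
  rw [Metric.continuousOn_iff]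
  intro x hx ε hε
  obtain ⟨δ, hδ, hmod⟩ := holder_mod hK hb hε
  refine ⟨δ, hδ, fun a ha hd => ?_⟩
  rw [Real.dist_eq] at hd ⊢
  rcases le_total a x with hax | hxa
  · have h1 := H a ha x hx hax
    have h2 : K * (x - a) ^ b < ε := hmod (x - a) (by linarith)
      (by rw [abs_of_nonpos (by linarith)] at hd; linarith)
    calc |f a - f x| = |f x - f a| := abs_sub_comm _ _
      _ ≤ K * (x - a) ^ b := h1
      _ < ε := h2
  · have h1 := H x hx a ha hxa
    have h2 : K * (a - x) ^ b < ε := hmod (a - x) (by linarith)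
      (by rw [abs_of_nonneg (by linarith)] at hd; linarith)
    calc |f a - f x| ≤ K * (a - x) ^ b := h1
      _ < ε := h2

lemma phiLap_abs {q : ℝ} (hq : 1 < q) (x : ℝ) : |phiLap q x| = |x| ^ (q - 1) := by
  rcases eq_or_ne x 0 with rfl | hx
  · simp [phiLap, Real.zero_rpow (by intro h; nlinarith [h] : q - 1 ≠ 0)]
  · have h1 : (0:ℝ) < |x| := abs_pos.2 hx
    rw [phiLap, abs_mul, abs_of_nonneg (Real.rpow_nonneg (abs_nonneg x) _),
      show q - 1 = q - 2 + 1 by ring, Real.rpow_add_one h1.ne']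

lemma phiLap_continuous {q : ℝ} (hq : 1 < q) : Continuous (phiLap q) := by
  rw [continuous_iff_continuousAt]
  intro x
  rcases eq_or_ne x 0 with rfl | hx
  · have h0 : phiLap q 0 = 0 := by simp [phiLap]
    unfold ContinuousAt
    rw [h0]
    apply squeeze_zero_norm (fun t => (phiLap_abs hq t).le)
    have hca : ContinuousAt (fun t : ℝ => |t| ^ (q - 1)) 0 :=
      (Real.continuousAt_rpow_const _ _ (Or.inr (by linarith))).comp
        continuous_abs.continuousAt
    simpa [abs_zero, Real.zero_rpow (by intro h; nlinarith [h] : q - 1 ≠ 0)]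
      using hca.tendsto
  · unfold phiLap
    exact ((Real.continuousAt_rpow_const _ _ (Or.inl (abs_ne_zero.2 hx))).comp
      continuous_abs.continuousAt).mul continuousAt_id



lemma ker_integrable {bb : ℝ} (hbb : 0 < bb) {h : ℝ → ℝ}
    (hh : ContinuousOn h (Set.Icc (0:ℝ) π)) {v a b : ℝ}
    (hsub : Set.uIcc a b ⊆ Set.Icc (0:ℝ) π) :
    IntervalIntegrable (fun r => (v - r) ^ (bb - 1) * h r) volume a b := by
  have h1 := (intervalIntegral.intervalIntegrable_rpow' (a := v - a) (b := v - b)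
    (by linarith : (-1:ℝ) < bb - 1)).comp_sub_left v
  simp only [sub_sub_cancel] at h1
  exact h1.mul_continuousOn (hh.mono hsub)

lemma ker_const_integrable {bb : ℝ} (hbb : 0 < bb) (v C a b : ℝ) :
    IntervalIntegrable (fun r => (v - r) ^ (bb - 1) * C) volume a b := by
  have h1 := (intervalIntegral.intervalIntegrable_rpow' (a := v - a) (b := v - b)
    (by linarith : (-1:ℝ) < bb - 1)).comp_sub_left v
  simp only [sub_sub_cancel] at h1
  exact h1.mul_continuousOn continuousOn_const

lemma ker_eval {bb : ℝ} (hbb : 0 < bb) {a s : ℝ} (has : a ≤ s) :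
    ∫ r in a..s, (s - r) ^ (bb - 1) = (s - a) ^ bb / bb := by
  have h1 : (∫ r in a..s, (s - r) ^ (bb - 1)) = ∫ x in (s - s)..(s - a), x ^ (bb - 1) :=
    intervalIntegral.integral_comp_sub_left (fun x => x ^ (bb - 1)) s
  rw [h1, sub_self, integral_rpow (Or.inl (by linarith)),
    Real.zero_rpow (by intro h; nlinarith [h] : bb - 1 + 1 ≠ 0), show bb - 1 + 1 = bb by ring,
    sub_zero]

lemma ker_const_eval {bb : ℝ} (hbb : 0 < bb) {a s : ℝ} (has : a ≤ s) (C : ℝ) :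
    ∫ r in a..s, (s - r) ^ (bb - 1) * C = (s - a) ^ bb / bb * C := by
  rw [intervalIntegral.integral_mul_const, ker_eval hbb has]

lemma ker_bound {bb C : ℝ} (hbb : 0 < bb) {h : ℝ → ℝ}
    (hh : ContinuousOn h (Set.Icc (0:ℝ) π)) (hC : ∀ r ∈ Set.Icc (0:ℝ) π, |h r| ≤ C)
    {a s : ℝ} (ha : 0 ≤ a) (has : a ≤ s) (hsπ : s ≤ π) :
    |∫ r in a..s, (s - r) ^ (bb - 1) * h r| ≤ C * ((s - a) ^ bb / bb) := by
  have hC0 : 0 ≤ C := (abs_nonneg _).trans (hC 0 ⟨le_refl 0, Real.pi_pos.le⟩)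
  have key : ‖∫ r in a..s, (s - r) ^ (bb - 1) * h r‖ ≤
      |∫ r in a..s, (s - r) ^ (bb - 1) * C| := by
    apply intervalIntegral.norm_integral_le_abs_of_norm_le _ (ker_const_integrable hbb s C a s)
    filter_upwards [MeasureTheory.ae_restrict_mem measurableSet_uIoc] with t ht
    rw [Set.uIoc_of_le has] at ht
    have h1 : (0:ℝ) ≤ (s - t) ^ (bb - 1) := Real.rpow_nonneg (by linarith [ht.2]) _
    rw [Real.norm_eq_abs, abs_mul, abs_of_nonneg h1]
    exact mul_le_mul_of_nonneg_left (hC t ⟨ha.trans ht.1.le, ht.2.trans hsπ⟩) h1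
  rw [Real.norm_eq_abs] at key
  have h2 : (0:ℝ) ≤ (s - a) ^ bb / bb * C :=
    mul_nonneg (div_nonneg (Real.rpow_nonneg (by linarith) _) hbb.le) hC0
  calc |∫ r in a..s, (s - r) ^ (bb - 1) * h r| ≤ |∫ r in a..s, (s - r) ^ (bb - 1) * C| := key
    _ = C * ((s - a) ^ bb / bb) := by rw [ker_const_eval hbb has C, abs_of_nonneg h2]; ring

lemma ker_diff_low {bb C : ℝ} (hb0 : 0 < bb) (hb1 : bb ≤ 1) {h : ℝ → ℝ}
    (hh : ContinuousOn h (Set.Icc (0:ℝ) π)) (hC : ∀ r ∈ Set.Icc (0:ℝ) π, |h r| ≤ C)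
    {s₁ s₂ : ℝ} (h0 : 0 ≤ s₁) (h12 : s₁ ≤ s₂) (h2π : s₂ ≤ π) :
    |(∫ r in (0:ℝ)..s₂, (s₂ - r) ^ (bb - 1) * h r) -
      ∫ r in (0:ℝ)..s₁, (s₁ - r) ^ (bb - 1) * h r| ≤ 2 * C * ((s₂ - s₁) ^ bb / bb) := by
  have hC0 : 0 ≤ C := (abs_nonneg _).trans (hC 0 ⟨le_refl 0, Real.pi_pos.le⟩)
  have h1π : s₁ ≤ π := h12.trans h2π
  have hsub1 : Set.uIcc (0:ℝ) s₁ ⊆ Set.Icc (0:ℝ) π := by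
    rw [Set.uIcc_of_le h0]; exact Set.Icc_subset_Icc le_rfl h1π
  have hsub2 : Set.uIcc s₁ s₂ ⊆ Set.Icc (0:ℝ) π := by
    rw [Set.uIcc_of_le h12]; exact Set.Icc_subset_Icc h0 h2π
  have int2a : IntervalIntegrable (fun r => (s₂ - r) ^ (bb - 1) * h r) volume 0 s₁ :=
    ker_integrable hb0 hh hsub1
  have int2b : IntervalIntegrable (fun r => (s₂ - r) ^ (bb - 1) * h r) volume s₁ s₂ :=
    ker_integrable hb0 hh hsub2
  have int1 : IntervalIntegrable (fun r => (s₁ - r) ^ (bb - 1) * h r) volume 0 s₁ :=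
    ker_integrable hb0 hh hsub1
  rw [← intervalIntegral.integral_add_adjacent_intervals int2a int2b]
  have TermB : |∫ r in s₁..s₂, (s₂ - r) ^ (bb - 1) * h r| ≤ C * ((s₂ - s₁) ^ bb / bb) :=
    ker_bound hb0 hh hC h0 h12 h2π
  have TermA : |(∫ r in (0:ℝ)..s₁, (s₂ - r) ^ (bb - 1) * h r) -
      ∫ r in (0:ℝ)..s₁, (s₁ - r) ^ (bb - 1) * h r| ≤ C * ((s₂ - s₁) ^ bb / bb) := by
    rw [← intervalIntegral.integral_sub int2a int1]
    have hgint : IntervalIntegrable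
        (fun r => ((s₁ - r) ^ (bb - 1) - (s₂ - r) ^ (bb - 1)) * C) volume 0 s₁ := by
      have h3 := (ker_const_integrable hb0 s₁ C 0 s₁).sub (ker_const_integrable hb0 s₂ C 0 s₁)
      have h4 : (fun r => ((s₁ - r) ^ (bb - 1) - (s₂ - r) ^ (bb - 1)) * C) =
          fun r => (s₁ - r) ^ (bb - 1) * C - (s₂ - r) ^ (bb - 1) * C := funext fun r => by ring
      rw [h4]; exact h3
    have key : ‖∫ r in (0:ℝ)..s₁, ((s₂ - r) ^ (bb - 1) * h r - (s₁ - r) ^ (bb - 1) * h r)‖ ≤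
        |∫ r in (0:ℝ)..s₁, ((s₁ - r) ^ (bb - 1) - (s₂ - r) ^ (bb - 1)) * C| := by
      apply intervalIntegral.norm_integral_le_abs_of_norm_le _ hgint
      have hne : ∀ᵐ t ∂(volume.restrict (Set.uIoc (0:ℝ) s₁)), t ≠ s₁ := by
        apply MeasureTheory.ae_restrict_of_ae
        filter_upwards [MeasureTheory.compl_mem_ae_iff.2 (measure_singleton s₁)] with t ht
        simpa using ht
      filter_upwards [hne, MeasureTheory.ae_restrict_mem measurableSet_uIoc] with t htne ht
      rw [Set.uIoc_of_le h0] at ht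
      have ht1 : 0 < s₁ - t := by
        rcases lt_or_eq_of_le ht.2 with hlt | heq
        · linarith
        · exact absurd heq htne
      have hmono : (s₂ - t) ^ (bb - 1) ≤ (s₁ - t) ^ (bb - 1) :=
        Real.rpow_le_rpow_of_nonpos ht1 (by linarith) (by linarith)
      have hk2 : (0:ℝ) ≤ (s₂ - t) ^ (bb - 1) := Real.rpow_nonneg (by linarith) _
      rw [Real.norm_eq_abs, ← sub_mul, abs_mul,
        abs_of_nonpos (by linarith : (s₂ - t) ^ (bb - 1) - (s₁ - t) ^ (bb - 1) ≤ 0), neg_sub]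
      exact mul_le_mul_of_nonneg_left (hC t ⟨ht.1.le, ht.2.trans h1π⟩) (by linarith)
    have hval : (∫ r in (0:ℝ)..s₁, ((s₁ - r) ^ (bb - 1) - (s₂ - r) ^ (bb - 1)) * C)
        = ((s₁ ^ bb - s₂ ^ bb + (s₂ - s₁) ^ bb) / bb) * C := by
      have e1 : (∫ r in (0:ℝ)..s₁, (s₁ - r) ^ (bb - 1) * C) = (s₁ - 0) ^ bb / bb * C :=
        ker_const_eval hb0 h0 C
      have e2 : (∫ r in (0:ℝ)..s₂, (s₂ - r) ^ (bb - 1) * C) = (s₂ - 0) ^ bb / bb * C :=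
        ker_const_eval hb0 (h0.trans h12) C
      have e3 : (∫ r in s₁..s₂, (s₂ - r) ^ (bb - 1) * C) = (s₂ - s₁) ^ bb / bb * C :=
        ker_const_eval hb0 h12 C
      have e4 : (∫ r in (0:ℝ)..s₁, (s₂ - r) ^ (bb - 1) * C)
          = (s₂ - 0) ^ bb / bb * C - (s₂ - s₁) ^ bb / bb * C := by
        have h5 := intervalIntegral.integral_add_adjacent_intervals
          (ker_const_integrable hb0 s₂ C 0 s₁) (ker_const_integrable hb0 s₂ C s₁ s₂)
        rw [e3, e2] at h5
        linarith
      have h6 : (fun r => ((s₁ - r) ^ (bb - 1) - (s₂ - r) ^ (bb - 1)) * C) =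
          fun r => (s₁ - r) ^ (bb - 1) * C - (s₂ - r) ^ (bb - 1) * C := funext fun r => by ring
      rw [h6, intervalIntegral.integral_sub (ker_const_integrable hb0 s₁ C 0 s₁)
        (ker_const_integrable hb0 s₂ C 0 s₁), e1, e4]
      rw [sub_zero, sub_zero]
      ring
    have hnum0 : 0 ≤ s₁ ^ bb - s₂ ^ bb + (s₂ - s₁) ^ bb := by
      have h7 := rpow_add_le_add_rpow (x := s₁) (y := s₂ - s₁) h0 (by linarith) hb0.le hb1
      rw [show s₁ + (s₂ - s₁) = s₂ by ring] at h7
      linarith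
    have hnum1 : s₁ ^ bb - s₂ ^ bb + (s₂ - s₁) ^ bb ≤ (s₂ - s₁) ^ bb := by
      have h8 : s₁ ^ bb ≤ s₂ ^ bb := Real.rpow_le_rpow h0 h12 hb0.le
      linarith
    rw [Real.norm_eq_abs] at key
    calc |(∫ r in (0:ℝ)..s₁, ((s₂ - r) ^ (bb - 1) * h r - (s₁ - r) ^ (bb - 1) * h r))| ≤
        |∫ r in (0:ℝ)..s₁, ((s₁ - r) ^ (bb - 1) - (s₂ - r) ^ (bb - 1)) * C| := key
      _ = ((s₁ ^ bb - s₂ ^ bb + (s₂ - s₁) ^ bb) / bb) * C := by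
          rw [hval, abs_of_nonneg (mul_nonneg (div_nonneg hnum0 hb0.le) hC0)]
      _ ≤ C * ((s₂ - s₁) ^ bb / bb) := by
          rw [mul_comm]
          apply mul_le_mul_of_nonneg_left _ hC0
          gcongr
  have e : ((∫ r in (0:ℝ)..s₁, (s₂ - r) ^ (bb - 1) * h r) +
      ∫ r in s₁..s₂, (s₂ - r) ^ (bb - 1) * h r) -
      (∫ r in (0:ℝ)..s₁, (s₁ - r) ^ (bb - 1) * h r) =
      ((∫ r in (0:ℝ)..s₁, (s₂ - r) ^ (bb - 1) * h r) -
      ∫ r in (0:ℝ)..s₁, (s₁ - r) ^ (bb - 1) * h r) +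
      ∫ r in s₁..s₂, (s₂ - r) ^ (bb - 1) * h r := by ring
  rw [e]
  calc |((∫ r in (0:ℝ)..s₁, (s₂ - r) ^ (bb - 1) * h r) -
      ∫ r in (0:ℝ)..s₁, (s₁ - r) ^ (bb - 1) * h r) +
      ∫ r in s₁..s₂, (s₂ - r) ^ (bb - 1) * h r| ≤
      |(∫ r in (0:ℝ)..s₁, (s₂ - r) ^ (bb - 1) * h r) -
      ∫ r in (0:ℝ)..s₁, (s₁ - r) ^ (bb - 1) * h r| +
      |∫ r in s₁..s₂, (s₂ - r) ^ (bb - 1) * h r| := abs_add_le _ _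
    _ ≤ 2 * C * ((s₂ - s₁) ^ bb / bb) := by linarith




lemma ker_diff_high {bb C : ℝ} (hb1 : 1 < bb) (hb2 : bb ≤ 2) {h : ℝ → ℝ}
    (hh : ContinuousOn h (Set.Icc (0:ℝ) π)) (hC : ∀ r ∈ Set.Icc (0:ℝ) π, |h r| ≤ C)
    {t₁ t₂ : ℝ} (h0 : 0 ≤ t₁) (h12 : t₁ ≤ t₂) (h2π : t₂ ≤ π) :
    |(∫ s in (0:ℝ)..t₂, (t₂ - s) ^ (bb - 1) * h s) -
      ∫ s in (0:ℝ)..t₁, (t₁ - s) ^ (bb - 1) * h s|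
      ≤ C * (2 * π) * (t₂ - t₁) ^ (bb - 1) := by
  have hb0 : (0:ℝ) < bb := by linarith
  have hC0 : 0 ≤ C := (abs_nonneg _).trans (hC 0 ⟨le_refl 0, Real.pi_pos.le⟩)
  have h1π : t₁ ≤ π := h12.trans h2π
  have hd0 : 0 ≤ t₂ - t₁ := by linarith
  have hdπ : t₂ - t₁ ≤ π := by linarith
  have hkd : (0:ℝ) ≤ (t₂ - t₁) ^ (bb - 1) := Real.rpow_nonneg hd0 _
  have hsub1 : Set.uIcc (0:ℝ) t₁ ⊆ Set.Icc (0:ℝ) π := by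
    rw [Set.uIcc_of_le h0]; exact Set.Icc_subset_Icc le_rfl h1π
  have hsub2 : Set.uIcc t₁ t₂ ⊆ Set.Icc (0:ℝ) π := by
    rw [Set.uIcc_of_le h12]; exact Set.Icc_subset_Icc h0 h2π
  have int2a : IntervalIntegrable (fun s => (t₂ - s) ^ (bb - 1) * h s) volume 0 t₁ :=
    ker_integrable hb0 hh hsub1
  have int2b : IntervalIntegrable (fun s => (t₂ - s) ^ (bb - 1) * h s) volume t₁ t₂ :=
    ker_integrable hb0 hh hsub2
  have int1 : IntervalIntegrable (fun s => (t₁ - s) ^ (bb - 1) * h s) volume 0 t₁ :=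
    ker_integrable hb0 hh hsub1
  rw [← intervalIntegral.integral_add_adjacent_intervals int2a int2b]
  have TermB : |∫ s in t₁..t₂, (t₂ - s) ^ (bb - 1) * h s| ≤ C * π * (t₂ - t₁) ^ (bb - 1) := by
    have hB1 : |∫ s in t₁..t₂, (t₂ - s) ^ (bb - 1) * h s| ≤ C * ((t₂ - t₁) ^ bb / bb) :=
      ker_bound hb0 hh hC h0 h12 h2π
    have e := Real.rpow_add' (x := t₂ - t₁) hd0 (y := bb - 1) (z := 1)
      (by intro hcon; nlinarith [hcon])
    rw [Real.rpow_one] at e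
    have ebb : bb - 1 + 1 = bb := by ring
    rw [ebb] at e
    have h6 : (t₂ - t₁) ^ bb / bb ≤ π * (t₂ - t₁) ^ (bb - 1) := by
      rw [e, div_le_iff₀ hb0]
      nlinarith [mul_le_mul_of_nonneg_left hdπ hkd,
        mul_nonneg (mul_nonneg Real.pi_pos.le hkd) (by linarith : (0:ℝ) ≤ bb - 1)]
    calc |∫ s in t₁..t₂, (t₂ - s) ^ (bb - 1) * h s| ≤ C * ((t₂ - t₁) ^ bb / bb) := hB1
      _ ≤ C * (π * (t₂ - t₁) ^ (bb - 1)) := mul_le_mul_of_nonneg_left h6 hC0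
      _ = C * π * (t₂ - t₁) ^ (bb - 1) := by ring
  have TermA : |(∫ s in (0:ℝ)..t₁, (t₂ - s) ^ (bb - 1) * h s) -
      ∫ s in (0:ℝ)..t₁, (t₁ - s) ^ (bb - 1) * h s| ≤ C * π * (t₂ - t₁) ^ (bb - 1) := by
    rw [← intervalIntegral.integral_sub int2a int1]
    have key : ‖∫ s in (0:ℝ)..t₁, ((t₂ - s) ^ (bb - 1) * h s - (t₁ - s) ^ (bb - 1) * h s)‖ ≤
        ((t₂ - t₁) ^ (bb - 1) * C) * |t₁ - 0| := by
      apply intervalIntegral.norm_integral_le_of_norm_le_const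
      intro x hx
      rw [Set.uIoc_of_le h0] at hx
      have hx1 : 0 ≤ t₁ - x := by linarith [hx.2]
      have hup : (t₂ - x) ^ (bb - 1) ≤ (t₁ - x) ^ (bb - 1) + (t₂ - t₁) ^ (bb - 1) := by
        have h7 := rpow_add_le_add_rpow (x := t₁ - x) (y := t₂ - t₁) (pp := bb - 1) hx1 hd0
          (by linarith) (by linarith)
        rw [show t₁ - x + (t₂ - t₁) = t₂ - x by ring] at h7
        exact h7
      have hlo : (t₁ - x) ^ (bb - 1) ≤ (t₂ - x) ^ (bb - 1) :=
        Real.rpow_le_rpow hx1 (by linarith) (by linarith)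
      have habs : |(t₂ - x) ^ (bb - 1) - (t₁ - x) ^ (bb - 1)| ≤ (t₂ - t₁) ^ (bb - 1) :=
        abs_le.2 ⟨by linarith, by linarith⟩
      rw [Real.norm_eq_abs, ← sub_mul, abs_mul]
      exact mul_le_mul habs (hC x ⟨hx.1.le, hx.2.trans h1π⟩) (abs_nonneg _) hkd
    rw [Real.norm_eq_abs, sub_zero, abs_of_nonneg h0] at key
    calc |(∫ s in (0:ℝ)..t₁, ((t₂ - s) ^ (bb - 1) * h s - (t₁ - s) ^ (bb - 1) * h s))| ≤
        (t₂ - t₁) ^ (bb - 1) * C * t₁ := key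
      _ ≤ C * π * (t₂ - t₁) ^ (bb - 1) := by
          nlinarith [mul_le_mul_of_nonneg_left h1π (mul_nonneg hkd hC0), hkd, hC0]
  have e2 : ((∫ s in (0:ℝ)..t₁, (t₂ - s) ^ (bb - 1) * h s) +
      ∫ s in t₁..t₂, (t₂ - s) ^ (bb - 1) * h s) -
      (∫ s in (0:ℝ)..t₁, (t₁ - s) ^ (bb - 1) * h s) =
      ((∫ s in (0:ℝ)..t₁, (t₂ - s) ^ (bb - 1) * h s) -
      ∫ s in (0:ℝ)..t₁, (t₁ - s) ^ (bb - 1) * h s) +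
      ∫ s in t₁..t₂, (t₂ - s) ^ (bb - 1) * h s := by ring
  rw [e2]
  calc |((∫ s in (0:ℝ)..t₁, (t₂ - s) ^ (bb - 1) * h s) -
      ∫ s in (0:ℝ)..t₁, (t₁ - s) ^ (bb - 1) * h s) +
      ∫ s in t₁..t₂, (t₂ - s) ^ (bb - 1) * h s| ≤
      |(∫ s in (0:ℝ)..t₁, (t₂ - s) ^ (bb - 1) * h s) -
      ∫ s in (0:ℝ)..t₁, (t₁ - s) ^ (bb - 1) * h s| +
      |∫ s in t₁..t₂, (t₂ - s) ^ (bb - 1) * h s| := abs_add_le _ _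
    _ ≤ C * (2 * π) * (t₂ - t₁) ^ (bb - 1) := by linarith

lemma ker_two_h {bb C : ℝ} (hbb : 0 < bb) {h₁ h₂ : ℝ → ℝ}
    (hh₁ : ContinuousOn h₁ (Set.Icc (0:ℝ) π)) (hh₂ : ContinuousOn h₂ (Set.Icc (0:ℝ) π))
    (hd : ∀ s ∈ Set.Icc (0:ℝ) π, |h₁ s - h₂ s| ≤ C) {t : ℝ} (ht : t ∈ Set.Icc (0:ℝ) π) :
    |(∫ s in (0:ℝ)..t, (t - s) ^ (bb - 1) * h₁ s) -
      ∫ s in (0:ℝ)..t, (t - s) ^ (bb - 1) * h₂ s| ≤ C * (π ^ bb / bb) := by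
  have hC0 : 0 ≤ C := (abs_nonneg _).trans (hd 0 ⟨le_refl 0, Real.pi_pos.le⟩)
  have hsub : Set.uIcc (0:ℝ) t ⊆ Set.Icc (0:ℝ) π := by
    rw [Set.uIcc_of_le ht.1]; exact Set.Icc_subset_Icc le_rfl ht.2
  rw [← intervalIntegral.integral_sub (ker_integrable hbb hh₁ hsub)
    (ker_integrable hbb hh₂ hsub)]
  rw [show (∫ s in (0:ℝ)..t, ((t - s) ^ (bb - 1) * h₁ s - (t - s) ^ (bb - 1) * h₂ s)) =
      ∫ s in (0:ℝ)..t, (t - s) ^ (bb - 1) * (h₁ s - h₂ s) from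
    intervalIntegral.integral_congr (fun s _ => by ring)]
  have hb := ker_bound hbb (hh₁.sub hh₂) hd le_rfl ht.1 ht.2
  calc |∫ s in (0:ℝ)..t, (t - s) ^ (bb - 1) * (h₁ s - h₂ s)| ≤ C * ((t - 0) ^ bb / bb) := hb
    _ ≤ C * (π ^ bb / bb) := by
        have h9 : (t - 0) ^ bb ≤ π ^ bb :=
          Real.rpow_le_rpow (by simpa using ht.1) (by simpa using ht.2) hbb.le
        apply mul_le_mul_of_nonneg_left _ hC0
        gcongr



/-! ### Mid-level definitions -/


noncomputable def hfun (m : ℝ → ℝ) (y : C(Set.Icc (0:ℝ) π, ℝ)) (r : ℝ) : ℝ :=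
  m (Set.projIcc 0 π Real.pi_pos.le r) * y (Set.projIcc 0 π Real.pi_pos.le r)

noncomputable def Gfun (β : ℝ) (m : ℝ → ℝ) (y : C(Set.Icc (0:ℝ) π, ℝ)) (s : ℝ) : ℝ :=
  (1 / Real.Gamma β) * ∫ r in (0:ℝ)..s, (s - r) ^ (β - 1) * hfun m y r

noncomputable def Ffun (β q : ℝ) (m : ℝ → ℝ) (y : C(Set.Icc (0:ℝ) π, ℝ)) (s : ℝ) : ℝ :=
  phiLap q (Gfun β m y s)

noncomputable def Avfun (α β q : ℝ) (m : ℝ → ℝ) (y : C(Set.Icc (0:ℝ) π, ℝ)) (t : ℝ) : ℝ :=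
  (1 / Real.Gamma α) * ∫ s in (0:ℝ)..t, (t - s) ^ (α - 1) * Ffun β q m y s

section Mid

variable {α β q Cm R : ℝ} {m : ℝ → ℝ} {y z : C(Set.Icc (0:ℝ) π, ℝ)}

lemma hfun_cont (hm : ContinuousOn m (Set.Icc 0 π)) (y : C(Set.Icc (0:ℝ) π, ℝ)) :
    Continuous (hfun m y) := by
  apply Continuous.mul
  · exact hm.comp_continuous (continuous_subtype_val.comp (continuous_projIcc))
      (fun x => Subtype.coe_prop _)
  · exact y.continuous.comp continuous_projIcc

lemma hfun_bdd (hCm : ∀ x ∈ Set.Icc (0:ℝ) π, |m x| ≤ Cm) (y : C(Set.Icc (0:ℝ) π, ℝ)) (r : ℝ) :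
    |hfun m y r| ≤ Cm * ‖y‖ := by
  have hCm0 : 0 ≤ Cm := (abs_nonneg _).trans (hCm 0 ⟨le_refl 0, Real.pi_pos.le⟩)
  rw [hfun, abs_mul]
  have h2 := y.norm_coe_le_norm (Set.projIcc 0 π Real.pi_pos.le r)
  rw [Real.norm_eq_abs] at h2
  exact mul_le_mul (hCm _ (Subtype.coe_prop _)) h2 (abs_nonneg _) hCm0

lemma Gfun_bdd (hβ0 : 0 < β) (hm : ContinuousOn m (Set.Icc 0 π))
    (hCm : ∀ x ∈ Set.Icc (0:ℝ) π, |m x| ≤ Cm)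
    (hyR : ‖y‖ ≤ R) {s : ℝ} (hs : s ∈ Set.Icc (0:ℝ) π) :
    |Gfun β m y s| ≤ (1 / Real.Gamma β) * (Cm * R) * (π ^ β / β) := by
  have hCm0 : 0 ≤ Cm := (abs_nonneg _).trans (hCm 0 ⟨le_refl 0, Real.pi_pos.le⟩)
  have hR0 : 0 ≤ R := (norm_nonneg y).trans hyR
  have hΓβ : 0 < Real.Gamma β := Real.Gamma_pos_of_pos hβ0
  have hcβ0 : 0 < 1 / Real.Gamma β := by positivity
  have hb := ker_bound hβ0 (hfun_cont hm y).continuousOn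
    (fun r _ => (hfun_bdd hCm y r).trans
      (mul_le_mul_of_nonneg_left hyR hCm0)) le_rfl hs.1 hs.2
  have h9 : (s - 0) ^ β ≤ π ^ β := by
    rw [sub_zero]; exact Real.rpow_le_rpow hs.1 hs.2 hβ0.le
  have h3 : (s - 0) ^ β / β ≤ π ^ β / β := by gcongr
  rw [Gfun, abs_mul, abs_of_pos hcβ0]
  calc (1 / Real.Gamma β) * |∫ r in (0:ℝ)..s, (s - r) ^ (β - 1) * hfun m y r|
      ≤ (1 / Real.Gamma β) * (Cm * R * ((s - 0) ^ β / β)) :=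
        mul_le_mul_of_nonneg_left hb hcβ0.le
    _ ≤ (1 / Real.Gamma β) * (Cm * R * (π ^ β / β)) := by
        apply mul_le_mul_of_nonneg_left _ hcβ0.le
        exact mul_le_mul_of_nonneg_left h3 (mul_nonneg hCm0 hR0)
    _ = (1 / Real.Gamma β) * (Cm * R) * (π ^ β / β) := by ring

lemma Gfun_holder (hβ0 : 0 < β) (hβ1 : β ≤ 1) (hm : ContinuousOn m (Set.Icc 0 π))
    (hCm : ∀ x ∈ Set.Icc (0:ℝ) π, |m x| ≤ Cm)
    {s₁ s₂ : ℝ} (hs₁ : s₁ ∈ Set.Icc (0:ℝ) π) (hs₂ : s₂ ∈ Set.Icc (0:ℝ) π) (h12 : s₁ ≤ s₂) :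
    |Gfun β m y s₂ - Gfun β m y s₁|
      ≤ ((1 / Real.Gamma β) * (2 * (Cm * ‖y‖)) / β) * (s₂ - s₁) ^ β := by
  have hΓβ : 0 < Real.Gamma β := Real.Gamma_pos_of_pos hβ0
  have hcβ0 : 0 < 1 / Real.Gamma β := by positivity
  have hd := ker_diff_low hβ0 hβ1 (hfun_cont hm y).continuousOn
    (fun r _ => hfun_bdd hCm y r) hs₁.1 h12 hs₂.2
  rw [Gfun, Gfun, ← mul_sub, abs_mul, abs_of_pos hcβ0]
  calc (1 / Real.Gamma β) * |(∫ r in (0:ℝ)..s₂, (s₂ - r) ^ (β - 1) * hfun m y r) -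
        ∫ r in (0:ℝ)..s₁, (s₁ - r) ^ (β - 1) * hfun m y r|
      ≤ (1 / Real.Gamma β) * (2 * (Cm * ‖y‖) * ((s₂ - s₁) ^ β / β)) :=
        mul_le_mul_of_nonneg_left hd hcβ0.le
    _ = ((1 / Real.Gamma β) * (2 * (Cm * ‖y‖)) / β) * (s₂ - s₁) ^ β := by ring

lemma Gfun_contOn (hβ0 : 0 < β) (hβ1 : β ≤ 1) (hm : ContinuousOn m (Set.Icc 0 π))
    (hCm : ∀ x ∈ Set.Icc (0:ℝ) π, |m x| ≤ Cm) :
    ContinuousOn (Gfun β m y) (Set.Icc (0:ℝ) π) := by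
  have hCm0 : 0 ≤ Cm := (abs_nonneg _).trans (hCm 0 ⟨le_refl 0, Real.pi_pos.le⟩)
  have hΓβ : 0 < Real.Gamma β := Real.Gamma_pos_of_pos hβ0
  apply continuousOn_of_holder (K := (1 / Real.Gamma β) * (2 * (Cm * ‖y‖)) / β) _ hβ0
  · exact fun x hx yy hyy hxy => Gfun_holder hβ0 hβ1 hm hCm hx hyy hxy
  · positivity

lemma Ffun_contOn (hβ0 : 0 < β) (hβ1 : β ≤ 1) (hq : 1 < q)
    (hm : ContinuousOn m (Set.Icc 0 π)) (hCm : ∀ x ∈ Set.Icc (0:ℝ) π, |m x| ≤ Cm) :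
    ContinuousOn (Ffun β q m y) (Set.Icc (0:ℝ) π) :=
  (phiLap_continuous hq).comp_continuousOn (Gfun_contOn hβ0 hβ1 hm hCm)

lemma Ffun_bdd (hβ0 : 0 < β) (hq : 1 < q) (hm : ContinuousOn m (Set.Icc 0 π))
    (hCm : ∀ x ∈ Set.Icc (0:ℝ) π, |m x| ≤ Cm)
    (hyR : ‖y‖ ≤ R) {s : ℝ} (hs : s ∈ Set.Icc (0:ℝ) π) :
    |Ffun β q m y s| ≤ ((1 / Real.Gamma β) * (Cm * R) * (π ^ β / β)) ^ (q - 1) := by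
  rw [Ffun, phiLap_abs hq]
  exact Real.rpow_le_rpow (abs_nonneg _) (Gfun_bdd hβ0 hm hCm hyR hs) (by linarith)

lemma Gfun_two (hβ0 : 0 < β) (hm : ContinuousOn m (Set.Icc 0 π))
    (hCm : ∀ x ∈ Set.Icc (0:ℝ) π, |m x| ≤ Cm) {s : ℝ} (hs : s ∈ Set.Icc (0:ℝ) π) :
    |Gfun β m y s - Gfun β m z s|
      ≤ (1 / Real.Gamma β) * (Cm * ‖y - z‖) * (π ^ β / β) := by
  have hCm0 : 0 ≤ Cm := (abs_nonneg _).trans (hCm 0 ⟨le_refl 0, Real.pi_pos.le⟩)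
  have hΓβ : 0 < Real.Gamma β := Real.Gamma_pos_of_pos hβ0
  have hcβ0 : 0 < 1 / Real.Gamma β := by positivity
  have hdiff : ∀ r ∈ Set.Icc (0:ℝ) π, |hfun m y r - hfun m z r| ≤ Cm * ‖y - z‖ := by
    intro r _
    have he : hfun m y r - hfun m z r = hfun m (y - z) r := by
      simp only [hfun, ContinuousMap.sub_apply]; ring
    rw [he]
    exact hfun_bdd hCm (y - z) r
  have hd := ker_two_h hβ0 (hfun_cont hm y).continuousOn (hfun_cont hm z).continuousOn
    hdiff hs
  rw [Gfun, Gfun, ← mul_sub, abs_mul, abs_of_pos hcβ0]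
  calc (1 / Real.Gamma β) * |(∫ r in (0:ℝ)..s, (s - r) ^ (β - 1) * hfun m y r) -
        ∫ r in (0:ℝ)..s, (s - r) ^ (β - 1) * hfun m z r|
      ≤ (1 / Real.Gamma β) * (Cm * ‖y - z‖ * (π ^ β / β)) :=
        mul_le_mul_of_nonneg_left hd hcβ0.le
    _ = (1 / Real.Gamma β) * (Cm * ‖y - z‖) * (π ^ β / β) := by ring

lemma Av_holder (hα1 : 1 < α) (hα2 : α ≤ 2) (hβ0 : 0 < β) (hβ1 : β ≤ 1) (hq : 1 < q)
    (hm : ContinuousOn m (Set.Icc 0 π)) (hCm : ∀ x ∈ Set.Icc (0:ℝ) π, |m x| ≤ Cm)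
    (hyR : ‖y‖ ≤ R) {t₁ t₂ : ℝ} (ht₁ : t₁ ∈ Set.Icc (0:ℝ) π) (ht₂ : t₂ ∈ Set.Icc (0:ℝ) π)
    (h12 : t₁ ≤ t₂) :
    |Avfun α β q m y t₂ - Avfun α β q m y t₁|
      ≤ ((1 / Real.Gamma α) * (((1 / Real.Gamma β) * (Cm * R) * (π ^ β / β)) ^ (q - 1))
          * (2 * π)) * (t₂ - t₁) ^ (α - 1) := by
  have hΓα : 0 < Real.Gamma α := Real.Gamma_pos_of_pos (by linarith)
  have hcα0 : 0 < 1 / Real.Gamma α := by positivity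
  have hd := ker_diff_high hα1 hα2 (Ffun_contOn hβ0 hβ1 hq hm hCm)
    (fun s hs => Ffun_bdd hβ0 hq hm hCm hyR hs) ht₁.1 h12 ht₂.2
  rw [Avfun, Avfun, ← mul_sub, abs_mul, abs_of_pos hcα0]
  calc (1 / Real.Gamma α) * |(∫ s in (0:ℝ)..t₂, (t₂ - s) ^ (α - 1) * Ffun β q m y s) -
        ∫ s in (0:ℝ)..t₁, (t₁ - s) ^ (α - 1) * Ffun β q m y s|
      ≤ (1 / Real.Gamma α) * ((((1 / Real.Gamma β) * (Cm * R) * (π ^ β / β)) ^ (q - 1))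
          * (2 * π) * (t₂ - t₁) ^ (α - 1)) := mul_le_mul_of_nonneg_left hd hcα0.le
    _ = ((1 / Real.Gamma α) * (((1 / Real.Gamma β) * (Cm * R) * (π ^ β / β)) ^ (q - 1))
          * (2 * π)) * (t₂ - t₁) ^ (α - 1) := by ring

lemma Av_contOn (hα1 : 1 < α) (hα2 : α ≤ 2) (hβ0 : 0 < β) (hβ1 : β ≤ 1) (hq : 1 < q)
    (hm : ContinuousOn m (Set.Icc 0 π)) (hCm : ∀ x ∈ Set.Icc (0:ℝ) π, |m x| ≤ Cm)
    (hCm0 : 0 ≤ Cm) :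
    ContinuousOn (Avfun α β q m y) (Set.Icc (0:ℝ) π) := by
  have hΓα : 0 < Real.Gamma α := Real.Gamma_pos_of_pos (by linarith)
  have hΓβ : 0 < Real.Gamma β := Real.Gamma_pos_of_pos hβ0
  apply continuousOn_of_holder
    (K := (1 / Real.Gamma α) * (((1 / Real.Gamma β) * (Cm * ‖y‖) * (π ^ β / β)) ^ (q - 1))
      * (2 * π)) _ (by linarith : (0:ℝ) < α - 1)
  · exact fun x hx yy hyy hxy =>
      Av_holder hα1 hα2 hβ0 hβ1 hq hm hCm le_rfl hx hyy hxy
  · have h1 : (0:ℝ) ≤ ((1 / Real.Gamma β) * (Cm * ‖y‖) * (π ^ β / β)) ^ (q - 1) :=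
      Real.rpow_nonneg (by positivity) _
    positivity

lemma Av_bdd (hα1 : 1 < α) (hβ0 : 0 < β) (hβ1 : β ≤ 1) (hq : 1 < q)
    (hm : ContinuousOn m (Set.Icc 0 π)) (hCm : ∀ x ∈ Set.Icc (0:ℝ) π, |m x| ≤ Cm)
    (hyR : ‖y‖ ≤ R) {t : ℝ} (ht : t ∈ Set.Icc (0:ℝ) π) :
    |Avfun α β q m y t| ≤ (1 / Real.Gamma α)
      * (((1 / Real.Gamma β) * (Cm * R) * (π ^ β / β)) ^ (q - 1)) * (π ^ α / α) := by
  have hα0 : (0:ℝ) < α := by linarith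
  have hCm0 : 0 ≤ Cm := (abs_nonneg _).trans (hCm 0 ⟨le_refl 0, Real.pi_pos.le⟩)
  have hR0 : 0 ≤ R := (norm_nonneg y).trans hyR
  have hΓα : 0 < Real.Gamma α := Real.Gamma_pos_of_pos hα0
  have hΓβ : 0 < Real.Gamma β := Real.Gamma_pos_of_pos hβ0
  have hcα0 : 0 < 1 / Real.Gamma α := by positivity
  have hβ1' : ∀ x ∈ Set.Icc (0:ℝ) π, |Ffun β q m y x| ≤
      ((1 / Real.Gamma β) * (Cm * R) * (π ^ β / β)) ^ (q - 1) :=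
    fun s hs => Ffun_bdd hβ0 hq hm hCm hyR hs
  have hD0 : 0 ≤ ((1 / Real.Gamma β) * (Cm * R) * (π ^ β / β)) ^ (q - 1) :=
    Real.rpow_nonneg (by
      apply mul_nonneg (mul_nonneg _ (mul_nonneg hCm0 hR0))
      · positivity
      · positivity) _
  have hb := ker_bound hα0 (Ffun_contOn hβ0 hβ1 hq hm hCm) hβ1' le_rfl ht.1 ht.2
  have h9 : (t - 0) ^ α ≤ π ^ α := by
    rw [sub_zero]; exact Real.rpow_le_rpow ht.1 ht.2 hα0.le
  have h3 : (t - 0) ^ α / α ≤ π ^ α / α := by gcongr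
  rw [Avfun, abs_mul, abs_of_pos hcα0]
  calc (1 / Real.Gamma α) * |∫ s in (0:ℝ)..t, (t - s) ^ (α - 1) * Ffun β q m y s|
      ≤ (1 / Real.Gamma α) * (((1 / Real.Gamma β) * (Cm * R) * (π ^ β / β)) ^ (q - 1)
          * ((t - 0) ^ α / α)) := mul_le_mul_of_nonneg_left hb hcα0.le
    _ ≤ (1 / Real.Gamma α) * (((1 / Real.Gamma β) * (Cm * R) * (π ^ β / β)) ^ (q - 1)
          * (π ^ α / α)) :=
        mul_le_mul_of_nonneg_left (mul_le_mul_of_nonneg_left h3 hD0) hcα0.le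
    _ = (1 / Real.Gamma α) * (((1 / Real.Gamma β) * (Cm * R) * (π ^ β / β)) ^ (q - 1))
          * (π ^ α / α) := by ring

lemma Av_two (hα1 : 1 < α) (hβ0 : 0 < β) (hβ1 : β ≤ 1) (hq : 1 < q)
    (hm : ContinuousOn m (Set.Icc 0 π)) (hCm : ∀ x ∈ Set.Icc (0:ℝ) π, |m x| ≤ Cm)
    {ε' : ℝ}
    (hFd : ∀ s ∈ Set.Icc (0:ℝ) π, |Ffun β q m y s - Ffun β q m z s| ≤ ε')
    {t : ℝ} (ht : t ∈ Set.Icc (0:ℝ) π) :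
    |Avfun α β q m y t - Avfun α β q m z t|
      ≤ (1 / Real.Gamma α) * (ε' * (π ^ α / α)) := by
  have hα0 : (0:ℝ) < α := by linarith
  have hΓα : 0 < Real.Gamma α := Real.Gamma_pos_of_pos hα0
  have hcα0 : 0 < 1 / Real.Gamma α := by positivity
  have hd := ker_two_h hα0 (Ffun_contOn hβ0 hβ1 hq hm hCm)
    (Ffun_contOn hβ0 hβ1 hq hm hCm (y := z)) hFd ht
  rw [Avfun, Avfun, ← mul_sub, abs_mul, abs_of_pos hcα0]
  exact mul_le_mul_of_nonneg_left hd hcα0.le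

end Mid


end SolOp

open SolOp

/-- Let `1 < α ≤ 2`, `0 < β ≤ 1`, `p > 1` with conjugate exponent `q`, and `m`
continuous on `[0,π]`.  The operator
`(A y)(t) = (1/Γ(α)) ∫_0^t (t-s)^{α-1} φ_q((1/Γ(β)) ∫_0^s (s-r)^{β-1} m(r) y(r) dr) ds`
maps `C([0,π],ℝ)` into itself, is continuous, and maps bounded sets to relatively
compact sets. -/
theorem solution_operator_compact (α β p q : ℝ)
    (hα1 : 1 < α) (hα2 : α ≤ 2) (hβ0 : 0 < β) (hβ1 : β ≤ 1)
    (hp : 1 < p) (hpq : 1 / p + 1 / q = 1)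
    (m : ℝ → ℝ) (hm : ContinuousOn m (Set.Icc 0 π)) :
    ∃ A : C(Set.Icc (0 : ℝ) π, ℝ) → C(Set.Icc (0 : ℝ) π, ℝ),
      (∀ (y : C(Set.Icc (0 : ℝ) π, ℝ)) (t : Set.Icc (0 : ℝ) π),
        A y t = (1 / Real.Gamma α) * ∫ s in (0 : ℝ)..(t : ℝ), ((t : ℝ) - s) ^ (α - 1) *
          phiLap q ((1 / Real.Gamma β) * ∫ r in (0 : ℝ)..s, (s - r) ^ (β - 1) *
            (m r * y (Set.projIcc 0 π Real.pi_pos.le r)))) ∧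
      Continuous A ∧
      (∀ S : Set C(Set.Icc (0 : ℝ) π, ℝ), Bornology.IsBounded S →
        IsCompact (closure (A '' S))) := by
  classical
  have hπ := Real.pi_pos
  have hp0 : (0:ℝ) < p := by linarith
  have hq1 : 1 < q := by
    have h1 : 1 / p < 1 := by rw [div_lt_one hp0]; exact hp
    have h1p : 0 < 1 / p := by positivity
    have hq0 : 0 < q := by
      rcases lt_trichotomy q 0 with h | h | h
      · exfalso
        have h2 : 1 / q < 0 := div_neg_of_pos_of_neg one_pos h
        linarith
      · exfalso; rw [h] at hpq; simp at hpq; linarith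
      · exact h
    have h3 : 1 / q < 1 := by linarith
    rwa [div_lt_one hq0] at h3
  have hα0 : (0:ℝ) < α := by linarith
  have hΓα : 0 < Real.Gamma α := Real.Gamma_pos_of_pos hα0
  have hΓβ : 0 < Real.Gamma β := Real.Gamma_pos_of_pos hβ0
  obtain ⟨Cm, hCm'⟩ := isCompact_Icc.exists_bound_of_continuousOn hm
  have hCm : ∀ x ∈ Set.Icc (0:ℝ) π, |m x| ≤ Cm := by
    intro x hx; rw [← Real.norm_eq_abs]; exact hCm' x hx
  have hCm0 : 0 ≤ Cm := (abs_nonneg _).trans (hCm 0 ⟨le_refl 0, hπ.le⟩)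
  let A : C(Set.Icc (0 : ℝ) π, ℝ) → C(Set.Icc (0 : ℝ) π, ℝ) := fun y =>
    ContinuousMap.mk ((Set.Icc (0:ℝ) π).restrict (Avfun α β q m y))
      (Av_contOn hα1 hα2 hβ0 hβ1 hq1 hm hCm hCm0).restrict
  have hA_apply : ∀ y t, A y t = Avfun α β q m y ↑t := fun y t => rfl
  refine ⟨A, ?_, ?_, ?_⟩
  · -- the formula
    intro y t
    rw [hA_apply, Avfun]
    congr 1
    apply intervalIntegral.integral_congr
    intro s hs
    rw [Set.uIcc_of_le t.2.1] at hs
    have hsπ : s ∈ Set.Icc (0:ℝ) π := ⟨hs.1, hs.2.trans t.2.2⟩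
    congr 1
    simp only [Ffun, Gfun]
    congr 2
    congr 1
    apply intervalIntegral.integral_congr
    intro r hr
    rw [Set.uIcc_of_le hsπ.1] at hr
    have hrπ : r ∈ Set.Icc (0:ℝ) π := ⟨hr.1, hr.2.trans hsπ.2⟩
    simp [hfun, Set.projIcc_of_mem Real.pi_pos.le hrπ]
  · -- continuity of A
    rw [Metric.continuous_iff]
    intro y₀ ε hε
    set R := ‖y₀‖ + 1 with hR
    have hR0 : 0 ≤ R := by positivity
    set Rg := (1 / Real.Gamma β) * (Cm * R) * (π ^ β / β) with hRg
    have hUC := (isCompact_Icc (a := -Rg) (b := Rg)).uniformContinuousOn_of_continuous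
      (phiLap_continuous hq1).continuousOn
    rw [Metric.uniformContinuousOn_iff] at hUC
    set X := (1 / Real.Gamma α) * (π ^ α / α) with hX
    have hX0 : 0 < X := by positivity
    obtain ⟨δ₁, hδ₁, hUC'⟩ := hUC (ε / (2 * X + 2)) (by positivity)
    set L := (1 / Real.Gamma β) * Cm * (π ^ β / β) with hL
    have hL0 : 0 ≤ L := by
      apply mul_nonneg (mul_nonneg _ hCm0) <;> positivity
    refine ⟨min 1 (δ₁ / (L + 1)), by positivity, fun y hyd => ?_⟩
    rw [dist_eq_norm] at hyd
    have hd1 : ‖y - y₀‖ < 1 := lt_of_lt_of_le hyd (min_le_left _ _)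
    have hd2 : ‖y - y₀‖ < δ₁ / (L + 1) := lt_of_lt_of_le hyd (min_le_right _ _)
    have hyR : ‖y‖ ≤ R := by
      have h4 := norm_sub_norm_le y y₀
      rw [hR]; linarith
    have hy₀R : ‖y₀‖ ≤ R := by rw [hR]; linarith
    have hFd : ∀ s ∈ Set.Icc (0:ℝ) π,
        |Ffun β q m y s - Ffun β q m y₀ s| ≤ ε / (2 * X + 2) := by
      intro s hs
      have hGy : Gfun β m y s ∈ Set.Icc (-Rg) Rg := by
        have h5 := Gfun_bdd hβ0 hm hCm hyR hs
        rw [← hRg] at h5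
        exact Set.mem_Icc.2 (abs_le.1 h5)
      have hGy₀ : Gfun β m y₀ s ∈ Set.Icc (-Rg) Rg := by
        have h5 := Gfun_bdd hβ0 hm hCm hy₀R hs
        rw [← hRg] at h5
        exact Set.mem_Icc.2 (abs_le.1 h5)
      have hGd : dist (Gfun β m y s) (Gfun β m y₀ s) < δ₁ := by
        rw [Real.dist_eq]
        have h5 := Gfun_two hβ0 hm hCm hs (y := y) (z := y₀)
        have h6 : (1 / Real.Gamma β) * (Cm * ‖y - y₀‖) * (π ^ β / β) = L * ‖y - y₀‖ := by
          rw [hL]; ring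
        rw [h6] at h5
        have h8 : L * ‖y - y₀‖ ≤ L * (δ₁ / (L + 1)) := mul_le_mul_of_nonneg_left hd2.le hL0
        have h9 : L * (δ₁ / (L + 1)) < δ₁ := by
          rw [mul_div_assoc', div_lt_iff₀ (by linarith)]
          nlinarith
        linarith
      have h7 := hUC' _ hGy _ hGy₀ hGd
      rw [Real.dist_eq] at h7
      simp only [Ffun]
      exact h7.le
    have hAd : ∀ t : Set.Icc (0:ℝ) π, dist (A y t) (A y₀ t) ≤ ε / 2 := by
      intro t
      rw [hA_apply, hA_apply, Real.dist_eq]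
      have h10 := Av_two hα1 hβ0 hβ1 hq1 hm hCm hFd t.2
      have h11 : (1 / Real.Gamma α) * (ε / (2 * X + 2) * (π ^ α / α))
          = X * (ε / (2 * X + 2)) := by rw [hX]; ring
      rw [h11] at h10
      have h12 : X * (ε / (2 * X + 2)) ≤ ε / 2 := by
        rw [mul_div_assoc', div_le_iff₀ (by linarith)]
        nlinarith
      linarith
    have h13 : dist (A y) (A y₀) ≤ ε / 2 :=
      (ContinuousMap.dist_le (by positivity)).2 hAd
    linarith
  · -- compactness
    intro S hS
    obtain ⟨R₀, hR₀⟩ := hS.subset_closedBall (0 : C(Set.Icc (0:ℝ) π, ℝ))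
    set R := max R₀ 0 with hRdef
    have hR0 : 0 ≤ R := le_max_right _ _
    have hyR : ∀ y ∈ S, ‖y‖ ≤ R := by
      intro y hy
      have h1 := hR₀ hy
      rw [Metric.mem_closedBall, dist_zero_right] at h1
      exact h1.trans (le_max_left _ _)
    set D := ((1 / Real.Gamma β) * (Cm * R) * (π ^ β / β)) ^ (q - 1) with hD
    have hD0 : 0 ≤ D := Real.rpow_nonneg
      (by apply mul_nonneg (mul_nonneg _ (mul_nonneg hCm0 hR0)) <;> positivity) _
    set M := (1 / Real.Gamma α) * D * (π ^ α / α) with hM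
    set KK := (1 / Real.Gamma α) * D * (2 * π) with hKK
    have hKK0 : 0 ≤ KK := by
      apply mul_nonneg (mul_nonneg _ hD0) <;> positivity
    have hAv_h : ∀ y ∈ S, ∀ t₁ ∈ Set.Icc (0:ℝ) π, ∀ t₂ ∈ Set.Icc (0:ℝ) π, t₁ ≤ t₂ →
        |Avfun α β q m y t₂ - Avfun α β q m y t₁| ≤ KK * (t₂ - t₁) ^ (α - 1) := by
      intro y hy t₁ h₁ t₂ h₂ h12
      have h3 := Av_holder hα1 hα2 hβ0 hβ1 hq1 hm hCm (hyR y hy) h₁ h₂ h12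
      rw [← hD, ← hKK] at h3
      exact h3
    have hAbd : ∀ y ∈ S, ∀ t : Set.Icc (0:ℝ) π, |A y t| ≤ M := by
      intro y hy t
      rw [hA_apply]
      have h3 := Av_bdd hα1 hβ0 hβ1 hq1 hm hCm (hyR y hy) t.2
      rw [← hD, ← hM] at h3
      exact h3
    set e := ContinuousMap.isometryEquivBoundedOfCompact (Set.Icc (0:ℝ) π) ℝ with he
    have hkey : IsCompact (closure (⇑e '' (A '' S))) := by
      apply BoundedContinuousFunction.arzela_ascoli (Set.Icc (-M) M) isCompact_Icc
      · rintro f x ⟨g, ⟨y, hyS, rfl⟩, rfl⟩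
        have h1 : (e (A y)) x = A y x := rfl
        rw [h1]
        exact Set.mem_Icc.2 (abs_le.1 (hAbd y hyS x))
      · intro x₀
        rw [Metric.equicontinuousAt_iff]
        intro ε hε
        obtain ⟨δ, hδ0, hmod⟩ := holder_mod hKK0 (by linarith : (0:ℝ) < α - 1) hε
        refine ⟨δ, hδ0, fun x hx i => ?_⟩
        obtain ⟨g, hg, hge⟩ := i.2
        obtain ⟨y, hyS, rfl⟩ := hg
        have hval : ∀ z : Set.Icc (0:ℝ) π, (i : BoundedContinuousFunction (Set.Icc (0:ℝ) π) ℝ) z = Avfun α β q m y ↑z := by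
          intro z; rw [← hge]; rfl
        rw [Subtype.dist_eq, Real.dist_eq] at hx
        rw [hval, hval, Real.dist_eq]
        rcases le_total ((x₀ : ℝ)) ((x : ℝ)) with h12 | h12
        · have h3 := hAv_h y hyS ↑x₀ x₀.2 ↑x x.2 h12
          have h13 := hmod ((x : ℝ) - ↑x₀) (by linarith)
            (by rw [abs_of_nonneg (by linarith)] at hx; linarith)
          calc |Avfun α β q m y ↑x₀ - Avfun α β q m y ↑x|
              = |Avfun α β q m y ↑x - Avfun α β q m y ↑x₀| := abs_sub_comm _ _
            _ ≤ KK * ((x : ℝ) - ↑x₀) ^ (α - 1) := h3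
            _ < ε := h13
        · have h3 := hAv_h y hyS ↑x x.2 ↑x₀ x₀.2 h12
          have h13 := hmod ((x₀ : ℝ) - ↑x) (by linarith)
            (by rw [abs_of_nonpos (by linarith)] at hx; linarith)
          calc |Avfun α β q m y ↑x₀ - Avfun α β q m y ↑x|
              ≤ KK * ((x₀ : ℝ) - ↑x) ^ (α - 1) := h3
            _ < ε := h13
    have hsub2 : A '' S ⊆ ⇑e.symm '' (closure (⇑e '' (A '' S))) := by
      intro a ha
      exact ⟨e a, subset_closure ⟨a, ha, rfl⟩, e.symm_apply_apply a⟩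
    exact IsCompact.of_isClosed_subset (hkey.image e.symm.continuous) isClosed_closure
      (closure_minimal hsub2 (hkey.image e.symm.continuous).isClosed)
end

section
/- Let 1 < α < 2, 0 < β < 1, p > 1 with conjugate exponent q (1/p + 1/q = 1), λ ∈ ℝ, and let P, Q : [0,t_1] → ℝ be continuous, 0 < t_1. Let y : [0,t_1] → ℝ be twice continuously differentiable and set w(t) = φ_p( (1/Γ(2−α)) ∫_0^t (t−s)^{1−α} y″(s) ds ) and G(t) = (1/Γ(1−β)) ∫_0^t (t−s)^{−β} w(s) ds. Assume: (i) G is differentiable on (0,t_1] with G′(t) = (2λ P(t) + Q(t)) y(t) for all t ∈ (0,t_1] (i.e., D^β_{0+} w = (2λP+Q) y); and (ii) lim_{t→0^+} G(t) = 0. Then for all t ∈ [0,t_1]: y(t) = (1/Γ(α)) ∫_0^t (t−s)^{α−1} φ_q( (1/Γ(β)) ∫_0^s (s−r)^{β−1} (2λ P(r) + Q(r)) y(r) dr ) ds + y(0) + y′(0) t. -/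
open MeasureTheory Set Filter Topology intervalIntegral

section auxLemmas

lemma phiLap_continuous {p : ℝ} (hp : 1 < p) : Continuous (phiLap p) := by
  rw [continuous_iff_continuousAt]
  intro x
  rcases eq_or_ne x 0 with rfl | hx
  · rw [ContinuousAt, phiLap]
    simp only [abs_zero, mul_zero]
    have h1 : Tendsto (fun s : ℝ => |s| ^ (p - 1)) (𝓝 0) (𝓝 0) := by
      have : ContinuousAt (fun s : ℝ => |s| ^ (p - 1)) 0 :=
        (Real.continuousAt_rpow_const (|(0:ℝ)|) (p-1) (by right; linarith)).comp
          (continuous_abs.continuousAt (x := (0:ℝ)))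
      simpa [Real.zero_rpow (sub_pos.mpr hp).ne'] using this.tendsto
    rw [tendsto_zero_iff_norm_tendsto_zero]
    refine squeeze_zero (fun s => norm_nonneg _) (fun s => ?_) h1
    rcases eq_or_ne s 0 with rfl | hs
    · simp [phiLap, Real.zero_rpow (sub_pos.mpr hp).ne']
    · have habs : (0:ℝ) < |s| := abs_pos.2 hs
      rw [phiLap, Real.norm_eq_abs, abs_mul, abs_of_nonneg (Real.rpow_nonneg (abs_nonneg s) _),
        ← Real.rpow_add_one habs.ne']
      ring_nf
      exact le_rfl
  · have h1 : ContinuousAt (fun s : ℝ => |s| ^ (p - 2)) x :=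
      (Real.continuousAt_rpow_const _ _ (by left; simpa using hx)).comp
        continuous_abs.continuousAt
    exact h1.mul continuousAt_id

lemma phiLap_inv {p q : ℝ} (hp : 1 < p) (hpq : 1 / p + 1 / q = 1) (s : ℝ) :
    phiLap q (phiLap p s) = s := by
  have hp0 : p ≠ 0 := by positivity
  have hp1 : p - 1 ≠ 0 := ne_of_gt (by linarith)
  have hq0 : q ≠ 0 := by
    intro h; rw [h] at hpq; simp at hpq; linarith
  have h2 : q + p = p * q := by field_simp at hpq; linarith
  have hkey : (p - 1) * (q - 2) + (p - 2) = 0 := by nlinarith [h2]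
  rcases eq_or_ne s 0 with rfl | hs
  · simp [phiLap]
  · have habs : (0:ℝ) < |s| := abs_pos.2 hs
    rw [phiLap, phiLap, abs_mul, abs_of_nonneg (Real.rpow_nonneg (abs_nonneg s) _),
      ← Real.rpow_add_one habs.ne', ← Real.rpow_mul (abs_nonneg s),
      ← mul_assoc, ← Real.rpow_add habs,
      show (p - 2 + 1) * (q - 2) + (p - 2) = (p-1)*(q-2) + (p-2) by ring, hkey,
      Real.rpow_zero, one_mul]

lemma auxI1 {c : ℝ} (hc : -1 < c) {g : ℝ → ℝ} (hg : Continuous g) (t : ℝ) :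
    IntervalIntegrable (fun s => (t - s) ^ c * g s) volume 0 t := by
  have h1 : IntervalIntegrable (fun s : ℝ => (t - s) ^ c) volume 0 t := by
    have := (intervalIntegrable_rpow' (a := t) (b := 0) hc).comp_sub_left t
    simpa using this
  exact h1.mul_continuousOn hg.continuousOn

lemma realBeta' {a b : ℝ} (ha : 0 < a) (hb : 0 < b) :
    ∫ x in (0:ℝ)..1, x ^ (a - 1) * (1 - x) ^ (b - 1)
      = Real.Gamma a * Real.Gamma b / Real.Gamma (a + b) := by
  have hB : Complex.betaIntegral a b
      = ((∫ x in (0:ℝ)..1, x ^ (a - 1) * (1 - x) ^ (b - 1) : ℝ) : ℂ) := by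
    rw [Complex.betaIntegral, ← intervalIntegral.integral_ofReal]
    refine intervalIntegral.integral_congr fun x hx => ?_
    rw [uIcc_of_le zero_le_one] at hx
    push_cast
    rw [Complex.ofReal_cpow hx.1, Complex.ofReal_cpow (by linarith [hx.2] : (0:ℝ) ≤ 1 - x)]
    push_cast
    ring
  have hmul := Complex.Gamma_mul_Gamma_eq_betaIntegral
    (s := (a:ℂ)) (t := (b:ℂ)) (by simpa using ha) (by simpa using hb)
  rw [hB] at hmul
  have hab : Complex.Gamma ((a:ℂ) + b) = (Real.Gamma (a+b) : ℂ) := by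
    rw [← Complex.ofReal_add, Complex.Gamma_ofReal]
  rw [Complex.Gamma_ofReal, Complex.Gamma_ofReal, hab] at hmul
  have h0 : Real.Gamma (a + b) ≠ 0 := (Real.Gamma_pos_of_pos (by linarith)).ne'
  have := hmul
  rw [← Complex.ofReal_mul, ← Complex.ofReal_mul] at this
  have h2 : Real.Gamma a * Real.Gamma b = Real.Gamma (a + b) *
      ∫ x in (0:ℝ)..1, x ^ (a - 1) * (1 - x) ^ (b - 1) := by exact_mod_cast this
  field_simp [h2]
  rw [h2]; ring

lemma auxC {a b r t : ℝ} (ha : 0 < a) (hb : 0 < b) (hrt : r < t) :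
    ∫ s in r..t, (t - s) ^ (a - 1) * (s - r) ^ (b - 1)
      = Real.Gamma a * Real.Gamma b / Real.Gamma (a + b) * (t - r) ^ (a + b - 1) := by
  have htr : 0 < t - r := sub_pos.2 hrt
  set F : ℝ → ℝ := fun s => (t - s) ^ (a - 1) * (s - r) ^ (b - 1) with hF
  have h1 : ∫ s in r..t, F s = ∫ u in (0:ℝ)..(t - r), F (u + r) := by
    rw [intervalIntegral.integral_comp_add_right F r]
    norm_num
  have h2 : ∫ u in (0:ℝ)..(t - r), F (u + r)
      = (t - r) * ∫ v in (0:ℝ)..1, F ((t - r) * v + r) := by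
    have h3 := intervalIntegral.integral_comp_mul_left (fun u => F (u + r)) htr.ne'
      (a := 0) (b := 1)
    rw [mul_zero, mul_one] at h3
    rw [h3, smul_eq_mul, ← mul_assoc, mul_inv_cancel₀ htr.ne', one_mul]
  have h4 : ∫ v in (0:ℝ)..1, F ((t - r) * v + r)
      = ∫ v in (0:ℝ)..1, (t - r) ^ (a - 1) * (t - r) ^ (b - 1) *
          (v ^ (b - 1) * (1 - v) ^ (a - 1)) := by
    refine intervalIntegral.integral_congr fun v hv => ?_
    rw [uIcc_of_le zero_le_one] at hv
    have e1 : t - ((t - r) * v + r) = (t - r) * (1 - v) := by ring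
    have e2 : (t - r) * v + r - r = (t - r) * v := by ring
    rw [hF]
    simp only [e1, e2]
    rw [Real.mul_rpow htr.le (by linarith [hv.2] : (0:ℝ) ≤ 1 - v),
      Real.mul_rpow htr.le hv.1]
    ring
  rw [h1, h2, h4, intervalIntegral.integral_const_mul, realBeta' hb ha]
  have hpow : (t - r) * ((t - r) ^ (a - 1) * (t - r) ^ (b - 1)) = (t - r) ^ (a + b - 1) := by
    rw [← Real.rpow_add htr, mul_comm, ← Real.rpow_add_one htr.ne']
    congr 1; ring
  rw [← mul_assoc, hpow, add_comm b a]
  ring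

lemma auxD {γ : ℝ} (hγ : 0 < γ) {g : ℝ → ℝ} (hg : Continuous g) :
    ContinuousOn (fun t => ∫ s in (0:ℝ)..t, (t - s) ^ (γ - 1) * g s) (Ici 0) := by
  set J : ℝ → ℝ := fun t => ∫ u in (0:ℝ)..1, (1 - u) ^ (γ - 1) * g (t * u) with hJdef
  have hJ : Continuous J := by
    rw [continuous_iff_continuousAt]
    intro t₀
    obtain ⟨M, hM⟩ := (isCompact_Icc (a := -(|t₀|+1)) (b := |t₀|+1)).exists_bound_of_continuousOn
      hg.continuousOn
    apply intervalIntegral.continuousAt_of_dominated_interval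
      (bound := fun u => (1 - u) ^ (γ - 1) * M)
    · filter_upwards with t
      apply Measurable.aestronglyMeasurable
      exact ((measurable_const.sub measurable_id).pow_const _).mul
        (hg.measurable.comp (measurable_id.const_mul t))
    · have hmem : Icc (t₀ - 1) (t₀ + 1) ∈ 𝓝 t₀ := Icc_mem_nhds (by linarith) (by linarith)
      filter_upwards [hmem] with t ht
      filter_upwards with u hu
      rw [uIoc_of_le zero_le_one] at hu
      have h1u : (0:ℝ) ≤ 1 - u := by linarith [hu.2]
      have htab : |t| ≤ |t₀| + 1 := by
        rw [abs_le]
        constructor <;>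
          · rcases ht with ⟨h1, h2⟩
            have := le_abs_self t₀; have := neg_abs_le t₀; linarith
      have hmem2 : t * u ∈ Icc (-(|t₀|+1)) (|t₀|+1) := by
        have : |t * u| ≤ |t₀| + 1 := by
          rw [abs_mul]
          calc |t| * |u| ≤ (|t₀| + 1) * 1 := by
                apply mul_le_mul htab _ (abs_nonneg u) (by positivity)
                rw [abs_le]; exact ⟨by linarith [hu.1], hu.2⟩
            _ = |t₀| + 1 := mul_one _
        exact abs_le.1 this
      rw [Real.norm_eq_abs, abs_mul, abs_of_nonneg (Real.rpow_nonneg h1u _)]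
      exact mul_le_mul_of_nonneg_left (hM _ hmem2) (Real.rpow_nonneg h1u _)
    · have h1 : IntervalIntegrable (fun u : ℝ => (1 - u) ^ (γ - 1)) volume 0 1 := by
        have := (intervalIntegrable_rpow' (a := 1) (b := 0)
          (by linarith : (-1:ℝ) < γ - 1)).comp_sub_left 1
        simpa using this
      exact h1.mul_const M
    · filter_upwards with u _
      exact continuousAt_const.mul ((hg.comp (continuous_id.mul continuous_const)).continuousAt)
  have hto : ContinuousOn (fun t : ℝ => t ^ γ * J t) (Ici 0) :=
    fun x _ => ((Real.continuousAt_rpow_const x γ (by right; linarith)).mul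
      hJ.continuousAt).continuousWithinAt
  refine hto.congr fun t ht => ?_
  rcases eq_or_lt_of_le (mem_Ici.1 ht) with rfl | htpos
  · simp [Real.zero_rpow hγ.ne']
  · have h3 := intervalIntegral.integral_comp_mul_left
      (fun s => (t - s) ^ (γ - 1) * g s) htpos.ne' (a := 0) (b := 1)
    rw [mul_zero, mul_one] at h3
    have h4 : ∫ u in (0:ℝ)..1, (t - t * u) ^ (γ - 1) * g (t * u)
        = t ^ (γ - 1) * J t := by
      rw [hJdef, ← intervalIntegral.integral_const_mul]
      refine intervalIntegral.integral_congr fun u hu => ?_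
      rw [uIcc_of_le zero_le_one] at hu
      have e1 : t - t * u = t * (1 - u) := by ring
      rw [e1, Real.mul_rpow htpos.le (by linarith [hu.2] : (0:ℝ) ≤ 1 - u)]
      ring
    rw [h4] at h3
    have h5 : t * t ^ (γ - 1) = t ^ γ := by
      rw [mul_comm, ← Real.rpow_add_one htpos.ne']; norm_num
    calc (∫ s in (0:ℝ)..t, (t - s) ^ (γ - 1) * g s)
        = t * (t⁻¹ • ∫ s in (0:ℝ)..t, (t - s) ^ (γ - 1) * g s) := by
          rw [smul_eq_mul, ← mul_assoc, mul_inv_cancel₀ htpos.ne', one_mul]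
      _ = t * (t ^ (γ - 1) * J t) := by rw [← h3]
      _ = t ^ γ * J t := by rw [← mul_assoc, h5]

lemma auxE {a b : ℝ} (ha : 0 < a) (hb : 0 < b) {g : ℝ → ℝ} (hg : Continuous g)
    {t : ℝ} (ht : 0 ≤ t) :
    ∫ s in (0:ℝ)..t, (t - s) ^ (a - 1) * ∫ r in (0:ℝ)..s, (s - r) ^ (b - 1) * g r
      = Real.Gamma a * Real.Gamma b / Real.Gamma (a + b) *
        ∫ r in (0:ℝ)..t, (t - r) ^ (a + b - 1) * g r := by
  rcases eq_or_lt_of_le ht with rfl | htpos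
  · simp
  set B := Real.Gamma a * Real.Gamma b / Real.Gamma (a + b) with hB
  set μ := volume.restrict (Ioc (0:ℝ) t) with hμ
  obtain ⟨M, hM⟩ := (isCompact_Icc (a := 0) (b := t)).exists_bound_of_continuousOn
    hg.continuousOn
  have hM0 : 0 ≤ M := le_trans (norm_nonneg (g 0)) (hM 0 ⟨le_rfl, ht⟩)
  set F : ℝ → ℝ → ℝ :=
    fun s r => if r < s then (t - s) ^ (a-1) * ((s - r) ^ (b-1) * g r) else 0 with hF
  have hFm : StronglyMeasurable (Function.uncurry F) := by
    apply Measurable.stronglyMeasurable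
    apply Measurable.ite
    · exact measurableSet_lt measurable_snd measurable_fst
    · exact ((measurable_const.sub measurable_fst).pow_const _).mul
        (((measurable_fst.sub measurable_snd).pow_const _).mul (hg.measurable.comp measurable_snd))
    · exact measurable_const
  have hind : ∀ s, F s = (Iio s).indicator
      (fun r => (t - s) ^ (a-1) * ((s - r) ^ (b-1) * g r)) := by
    intro s; funext r; simp only [hF, Set.indicator_apply, mem_Iio]
  have hcap : ∀ s ∈ Ioc (0:ℝ) t, Iio s ∩ Ioc 0 t = Ioo 0 s := by
    intro s hs
    ext r
    simp only [mem_inter_iff, mem_Iio, mem_Ioc, mem_Ioo]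
    constructor
    · rintro ⟨h3, h4, _⟩; exact ⟨h4, h3⟩
    · rintro ⟨h4, h3⟩; exact ⟨h3, h4, h3.le.trans hs.2⟩
  have hIoo : ∀ s ∈ Ioc (0:ℝ) t, IntegrableOn
      (fun r => (s - r) ^ (b-1) * g r) (Ioo 0 s) volume := by
    intro s hs
    exact ((intervalIntegrable_iff_integrableOn_Ioc_of_le hs.1.le).1
      (auxI1 (by linarith) hg s)).mono_set Ioo_subset_Ioc_self
  have hsec : ∀ s ∈ Ioc (0:ℝ) t, Integrable (F s) μ := by
    intro s hs
    rw [hind s, hμ, integrable_indicator_iff measurableSet_Iio, IntegrableOn,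
      Measure.restrict_restrict measurableSet_Iio, hcap s hs]
    exact ((hIoo s hs).const_mul _)
  have hinner : ∀ s ∈ Ioc (0:ℝ) t, (∫ r, F s r ∂μ)
      = (t - s) ^ (a-1) * ∫ r in (0:ℝ)..s, (s - r) ^ (b-1) * g r := by
    intro s hs
    rw [hind s, hμ, MeasureTheory.integral_indicator measurableSet_Iio,
      Measure.restrict_restrict measurableSet_Iio, hcap s hs,
      ← MeasureTheory.integral_Ioc_eq_integral_Ioo,
      ← intervalIntegral.integral_of_le hs.1.le,
      intervalIntegral.integral_const_mul]
  have hinner2 : ∀ r ∈ Ioo (0:ℝ) t, (∫ s, F s r ∂μ) = B * (t - r) ^ (a+b-1) * g r := by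
    intro r hr
    have h1 : (fun s => F s r) = (Ioi r).indicator
        (fun s => (t - s) ^ (a-1) * ((s - r) ^ (b-1) * g r)) := by
      funext s; simp only [hF, Set.indicator_apply, mem_Ioi]
    have h2 : Ioi r ∩ Ioc 0 t = Ioc r t := by
      ext s
      simp only [mem_inter_iff, mem_Ioi, mem_Ioc]
      constructor
      · rintro ⟨h3, _, h5⟩; exact ⟨h3, h5⟩
      · rintro ⟨h3, h5⟩; exact ⟨h3, hr.1.trans h3, h5⟩
    rw [h1, hμ, MeasureTheory.integral_indicator measurableSet_Ioi,
      Measure.restrict_restrict measurableSet_Ioi, h2,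
      ← intervalIntegral.integral_of_le hr.2.le]
    calc ∫ s in r..t, (t - s) ^ (a-1) * ((s - r) ^ (b-1) * g r)
        = ∫ s in r..t, ((t - s) ^ (a-1) * (s - r) ^ (b-1)) * g r := by
          simp only [mul_assoc]
      _ = (∫ s in r..t, (t - s) ^ (a-1) * (s - r) ^ (b-1)) * g r :=
          intervalIntegral.integral_mul_const _ _
      _ = B * (t - r) ^ (a+b-1) * g r := by rw [auxC ha hb hr.2]
  have hsb : ∀ s ∈ Ioc (0:ℝ) t, (∫ r in Ioo (0:ℝ) s, (s - r) ^ (b-1)) = s ^ b / b := by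
    intro s hs
    rw [← MeasureTheory.integral_Ioc_eq_integral_Ioo, ← intervalIntegral.integral_of_le hs.1.le]
    have h1 := intervalIntegral.integral_comp_sub_left (a := 0) (b := s)
      (fun x : ℝ => x ^ (b-1)) s
    rw [sub_zero, sub_self] at h1
    rw [h1, integral_rpow (Or.inl (by linarith))]
    rw [Real.zero_rpow (by linarith : b - 1 + 1 ≠ 0)]
    norm_num
  have hnorm : ∀ s ∈ Ioc (0:ℝ) t, (∫ r, ‖F s r‖ ∂μ) ≤ M * t ^ b / b * (t - s) ^ (a-1) := by
    intro s hs
    have hts : (0:ℝ) ≤ t - s := sub_nonneg.2 hs.2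
    have heq : (fun r => ‖F s r‖) = (Iio s).indicator
        (fun r => ‖(t - s) ^ (a-1) * ((s - r) ^ (b-1) * g r)‖) := by
      rw [hind s]; funext r
      simp only [Set.indicator_apply]
      split <;> simp
    rw [heq, hμ, MeasureTheory.integral_indicator measurableSet_Iio,
      Measure.restrict_restrict measurableSet_Iio, hcap s hs]
    have hb1 : IntegrableOn (fun r => ‖(t - s) ^ (a-1) * ((s - r) ^ (b-1) * g r)‖)
        (Ioo 0 s) volume := ((hIoo s hs).const_mul ((t - s) ^ (a-1))).norm
    have hb2 : IntegrableOn (fun r => (t - s) ^ (a-1) * ((s - r) ^ (b-1) * M))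
        (Ioo 0 s) volume := by
      have : IntegrableOn (fun r => (s - r) ^ (b-1) * M) (Ioo 0 s) volume := by
        have := (auxI1 (g := fun _ => M) (by linarith : (-1:ℝ) < b - 1)
          continuous_const s)
        exact ((intervalIntegrable_iff_integrableOn_Ioc_of_le hs.1.le).1 this).mono_set
          Ioo_subset_Ioc_self
      exact this.const_mul _
    have hstep : (∫ r in Ioo (0:ℝ) s, ‖(t - s) ^ (a-1) * ((s - r) ^ (b-1) * g r)‖)
        ≤ ∫ r in Ioo (0:ℝ) s, (t - s) ^ (a-1) * ((s - r) ^ (b-1) * M) := by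
      refine setIntegral_mono_on hb1 hb2 measurableSet_Ioo fun r hr => ?_
      have hsr : (0:ℝ) ≤ s - r := by linarith [hr.2]
      rw [norm_mul, norm_mul, Real.norm_eq_abs, Real.norm_eq_abs,
        abs_of_nonneg (Real.rpow_nonneg hts _), abs_of_nonneg (Real.rpow_nonneg hsr _)]
      have hgr : |g r| ≤ M := by
        have := hM r ⟨hr.1.le, (hr.2.le.trans hs.2)⟩
        rwa [Real.norm_eq_abs] at this
      exact mul_le_mul_of_nonneg_left
        (mul_le_mul_of_nonneg_left hgr (Real.rpow_nonneg hsr _))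
        (Real.rpow_nonneg hts _)
    refine hstep.trans ?_
    rw [MeasureTheory.integral_const_mul]
    have h3 : (∫ r in Ioo (0:ℝ) s, (s - r) ^ (b-1) * M) = s ^ b / b * M := by
      rw [MeasureTheory.integral_mul_const, hsb s hs]
    rw [h3]
    have h4 : s ^ b ≤ t ^ b := Real.rpow_le_rpow hs.1.le hs.2 hb.le
    calc (t - s) ^ (a-1) * (s ^ b / b * M) ≤ (t - s) ^ (a-1) * (t ^ b / b * M) := by
          gcongr
      _ = M * t ^ b / b * (t - s) ^ (a-1) := by ring
  have hbnd_int : Integrable (fun s => M * t ^ b / b * (t - s) ^ (a-1)) μ := by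
    have h1 : IntervalIntegrable (fun s : ℝ => (t - s) ^ (a-1)) volume 0 t := by
      have := (intervalIntegrable_rpow' (a := t) (b := 0)
        (by linarith : (-1:ℝ) < a - 1)).comp_sub_left t
      simpa using this
    rw [hμ]
    exact (((intervalIntegrable_iff_integrableOn_Ioc_of_le ht).1 h1).const_mul _)
  have hprod : Integrable (Function.uncurry F) (μ.prod μ) := by
    rw [integrable_prod_iff hFm.aestronglyMeasurable]
    constructor
    · rw [hμ]
      exact (ae_restrict_iff' measurableSet_Ioc).2 (Eventually.of_forall fun s hs => by
        simpa [hμ] using hsec s hs)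
    · refine Integrable.mono' hbnd_int
        (hFm.norm.integral_prod_right'.aestronglyMeasurable) ?_
      rw [hμ]
      refine (ae_restrict_iff' measurableSet_Ioc).2 (Eventually.of_forall fun s hs => ?_)
      rw [Real.norm_eq_abs, abs_of_nonneg (integral_nonneg fun r => norm_nonneg _)]
      exact hnorm s hs
  have hswap := MeasureTheory.integral_integral_swap hprod
  have hL : (∫ s, ∫ r, F s r ∂μ ∂μ)
      = ∫ s in (0:ℝ)..t, (t - s) ^ (a-1) * ∫ r in (0:ℝ)..s, (s - r) ^ (b-1) * g r := by
    rw [intervalIntegral.integral_of_le ht, hμ]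
    exact setIntegral_congr_fun measurableSet_Ioc fun s hs => by
      simpa [hμ] using hinner s hs
  have hR : (∫ r, ∫ s, F s r ∂μ ∂μ)
      = B * ∫ r in (0:ℝ)..t, (t - r) ^ (a+b-1) * g r := by
    rw [intervalIntegral.integral_of_le ht, ← MeasureTheory.integral_const_mul,
      MeasureTheory.integral_Ioc_eq_integral_Ioo, hμ,
      MeasureTheory.integral_Ioc_eq_integral_Ioo]
    refine setIntegral_congr_fun measurableSet_Ioo fun r hr => ?_
    rw [show (volume.restrict (Ioc (0:ℝ) t)) = μ from hμ.symm]
    rw [hinner2 r hr]; ring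
  rw [← hL, hswap, hR]

end auxLemmas

/-- First step of Theorem 8 of the paper: on `[0,t₁]`, a twice continuously
differentiable solution `y` of the fractional `p`-Laplacian diffusion equation
`-D^β_{0+} φ_p(^C D^α_{0+} y) + (2λP + Q) y = 0` (encoded via `w = φ_p(^C D^α_{0+} y)`,
`G = I^{1-β}_{0+} w`, `G' = (2λP + Q) y` on `(0,t₁]`, and `G(0^+) = 0`) satisfies the
integral equation
`y(t) = I^α_{0+} φ_q( I^β_{0+}((2λP + Q) y) )(t) + y(0) + y'(0) t`. -/
theorem integral_representation_first_interval
    (α β p q lam t₁ : ℝ)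
    (hα1 : 1 < α) (hα2 : α < 2) (hβ0 : 0 < β) (hβ1 : β < 1)
    (hp : 1 < p) (hpq : 1 / p + 1 / q = 1) (ht₁ : 0 < t₁)
    (P Q y y' y'' : ℝ → ℝ)
    (hP : ContinuousOn P (Set.Icc 0 t₁)) (hQ : ContinuousOn Q (Set.Icc 0 t₁))
    (hy : ∀ t ∈ Set.Icc (0 : ℝ) t₁, HasDerivWithinAt y (y' t) (Set.Icc 0 t₁) t)
    (hy' : ∀ t ∈ Set.Icc (0 : ℝ) t₁, HasDerivWithinAt y' (y'' t) (Set.Icc 0 t₁) t)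
    (hy'' : ContinuousOn y'' (Set.Icc 0 t₁))
    (w G : ℝ → ℝ)
    (hw : ∀ t, w t =
      phiLap p ((1 / Real.Gamma (2 - α)) * ∫ s in (0 : ℝ)..t, (t - s) ^ (1 - α) * y'' s))
    (hG : ∀ t, G t = (1 / Real.Gamma (1 - β)) * ∫ s in (0 : ℝ)..t, (t - s) ^ (-β) * w s)
    (hGderiv : ∀ t ∈ Set.Ioc (0 : ℝ) t₁,
      HasDerivWithinAt G ((2 * lam * P t + Q t) * y t) (Set.Ioc 0 t₁) t)
    (hG0 : Tendsto G (𝓝[>] (0 : ℝ)) (𝓝 0)) :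
    ∀ t ∈ Set.Icc (0 : ℝ) t₁,
      y t = (1 / Real.Gamma α) * (∫ s in (0 : ℝ)..t, (t - s) ^ (α - 1) *
          phiLap q ((1 / Real.Gamma β) * ∫ r in (0 : ℝ)..s, (s - r) ^ (β - 1) *
            ((2 * lam * P r + Q r) * y r)))
        + y 0 + y' 0 * t := by
  have hΓβ : (0:ℝ) < Real.Gamma β := Real.Gamma_pos_of_pos hβ0
  have hΓβ' : (0:ℝ) < Real.Gamma (1 - β) := Real.Gamma_pos_of_pos (by linarith)
  have hΓα : (0:ℝ) < Real.Gamma α := Real.Gamma_pos_of_pos (by linarith)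
  have hΓα' : (0:ℝ) < Real.Gamma (2 - α) := Real.Gamma_pos_of_pos (by linarith)
  have hΓβ1 : (0:ℝ) < Real.Gamma (β + 1) := Real.Gamma_pos_of_pos (by linarith)
  have hΓ2 : Real.Gamma 2 = 1 := by
    rw [show (2:ℝ) = 1 + 1 by norm_num, Real.Gamma_add_one one_ne_zero, Real.Gamma_one, mul_one]
  -- clamp to [0, t₁]
  set cl : ℝ → ℝ := fun x => max 0 (min t₁ x) with hcl
  have hclcont : Continuous cl := continuous_const.max (continuous_const.min continuous_id)
  have hclmem : ∀ x, cl x ∈ Icc 0 t₁ := fun x =>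
    ⟨le_max_left _ _, max_le ht₁.le (min_le_left _ _)⟩
  have hclid : ∀ x ∈ Icc (0:ℝ) t₁, cl x = x := fun x hx => by
    rw [hcl]; dsimp only; rw [min_eq_right hx.2, max_eq_right hx.1]
  -- continuity of the data
  have hycont : ContinuousOn y (Icc 0 t₁) := fun x hx => (hy x hx).continuousWithinAt
  have hy'cont : ContinuousOn y' (Icc 0 t₁) := fun x hx => (hy' x hx).continuousWithinAt
  have hfcont : ContinuousOn (fun r => (2 * lam * P r + Q r) * y r) (Icc 0 t₁) :=
    ((continuousOn_const.mul hP).add hQ).mul hycont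
  -- extended versions
  set fe : ℝ → ℝ := fun x => (2 * lam * P (cl x) + Q (cl x)) * y (cl x) with hfe
  have hfecont : Continuous fe := hfcont.comp_continuous hclcont hclmem
  have hfeeq : ∀ x ∈ Icc (0:ℝ) t₁, fe x = (2 * lam * P x + Q x) * y x := fun x hx => by
    rw [hfe]; dsimp only; rw [hclid x hx]
  set ye : ℝ → ℝ := fun x => y'' (cl x) with hye
  have hyecont : Continuous ye := hy''.comp_continuous hclcont hclmem
  have hyeeq : ∀ x ∈ Icc (0:ℝ) t₁, ye x = y'' x := fun x hx => by
    rw [hye]; dsimp only; rw [hclid x hx]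
  -- fractional integrals
  set v : ℝ → ℝ := fun x =>
    (1 / Real.Gamma (2 - α)) * ∫ s in (0:ℝ)..x, (x - s) ^ (2 - α - 1) * ye s with hv
  set h : ℝ → ℝ := fun x =>
    (1 / Real.Gamma β) * ∫ r in (0:ℝ)..x, (x - r) ^ (β - 1) * fe r with hh
  have hvcont : ContinuousOn v (Ici 0) :=
    continuousOn_const.mul (auxD (by linarith : (0:ℝ) < 2 - α) hyecont)
  have hhcont : ContinuousOn h (Ici 0) :=
    continuousOn_const.mul (auxD hβ0 hfecont)
  -- w = φ_p (v) on [0,t₁]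
  have hwv : ∀ x ∈ Icc (0:ℝ) t₁, w x = phiLap p (v x) := by
    intro x hx
    rw [hw x, hv]
    congr 2
    refine intervalIntegral.integral_congr fun s hs => ?_
    rw [uIcc_of_le hx.1] at hs
    rw [show (1 - α) = 2 - α - 1 by ring, hyeeq s ⟨hs.1, hs.2.trans hx.2⟩]
  have hwcont : ContinuousOn w (Icc 0 t₁) :=
    ((phiLap_continuous hp).comp_continuousOn
      (hvcont.mono (fun x hx => hx.1))).congr hwv
  set we : ℝ → ℝ := fun x => w (cl x) with hwe
  have hwecont : Continuous we := hwcont.comp_continuous hclcont hclmem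
  have hweeq : ∀ x ∈ Icc (0:ℝ) t₁, we x = w x := fun x hx => by
    rw [hwe]; dsimp only; rw [hclid x hx]
  -- G = ∫ fe
  have hG0val : G 0 = 0 := by rw [hG 0]; simp
  have hGeq : ∀ x ∈ Icc (0:ℝ) t₁, G x = ∫ s in (0:ℝ)..x, fe s := by
    intro x hx
    rcases eq_or_lt_of_le hx.1 with rfl | hx0
    · simp [hG0val]
    · have hcont : ContinuousOn G (Icc 0 x) := by
        intro z hz
        rcases eq_or_lt_of_le hz.1 with rfl | hz0
        · have hicc : Icc (0:ℝ) x = insert 0 (Ioc 0 x) := by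
            ext u; simp only [mem_Icc, mem_insert_iff, mem_Ioc]
            constructor
            · rintro ⟨h1, h2⟩
              rcases eq_or_lt_of_le h1 with rfl | h1'
              · exact Or.inl rfl
              · exact Or.inr ⟨h1', h2⟩
            · rintro (rfl | ⟨h1, h2⟩)
              · exact ⟨le_rfl, hx0.le⟩
              · exact ⟨h1.le, h2⟩
          rw [ContinuousWithinAt, hG0val, hicc, nhdsWithin_insert]
          refine Tendsto.sup ?_ ?_
          · simpa [hG0val] using (tendsto_pure_nhds G 0)
          · exact hG0.mono_left (nhdsWithin_mono 0 Ioc_subset_Ioi_self)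
        · have hzt : z ∈ Ioc 0 t₁ := ⟨hz0, hz.2.trans hx.2⟩
          refine ((hGderiv z hzt).continuousWithinAt).mono_of_mem_nhdsWithin ?_
          rw [mem_nhdsWithin]
          exact ⟨Ioi 0, isOpen_Ioi, hz0, fun u hu => ⟨hu.1, hu.2.2.trans hx.2⟩⟩
      have hderiv : ∀ z ∈ Ioo (0:ℝ) x, HasDerivWithinAt G (fe z) (Ioi z) z := by
        intro z hz
        have hzt : z ∈ Ioc 0 t₁ := ⟨hz.1, hz.2.le.trans hx.2⟩
        have hmem : Ioc (0:ℝ) t₁ ∈ 𝓝[Ioi z] z := by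
          rw [mem_nhdsWithin]
          exact ⟨Iio t₁, isOpen_Iio, lt_of_lt_of_le hz.2 hx.2,
            fun u hu => ⟨hz.1.trans hu.2, hu.1.le⟩⟩
        have h2 := (hGderiv z hzt).mono_of_mem_nhdsWithin hmem
        rw [hfeeq z ⟨hz.1.le, hz.2.le.trans hx.2⟩]
        exact h2
      have hint : IntervalIntegrable fe volume 0 x := hfecont.intervalIntegrable _ _
      have := intervalIntegral.integral_eq_sub_of_hasDeriv_right_of_le hx0.le hcont hderiv hint
      rw [hG0val, sub_zero] at this
      exact this.symm
  -- key identity : ∫ we = ∫ h on [0,t₁]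
  have key : ∀ t ∈ Icc (0:ℝ) t₁, (∫ s in (0:ℝ)..t, we s) = ∫ s in (0:ℝ)..t, h s := by
    intro t ht
    have ht0 : (0:ℝ) ≤ t := ht.1
    have E1 := auxE hβ0 (by linarith : (0:ℝ) < 1 - β) hwecont ht0
    rw [show β + (1 - β) = 1 by ring] at E1
    rw [Real.Gamma_one, div_one] at E1
    simp only [show (1:ℝ) - 1 = 0 by norm_num, Real.rpow_zero, one_mul] at E1
    have E2 := auxE hβ0 one_pos hfecont ht0
    rw [Real.Gamma_one, mul_one, show β + 1 - 1 = β by ring] at E2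
    have E3 := auxE one_pos hβ0 hfecont ht0
    rw [Real.Gamma_one, one_mul, show (1:ℝ) + β - 1 = β by ring,
      show (1:ℝ) + β = β + 1 by ring] at E3
    simp only [show (1:ℝ) - 1 = 0 by norm_num, Real.rpow_zero, one_mul] at E2 E3
    have eq1 : ∫ s in (0:ℝ)..t, (t - s) ^ (β - 1) * G s
        = (1 / Real.Gamma (1 - β)) *
          ∫ s in (0:ℝ)..t, (t - s) ^ (β - 1) * ∫ r in (0:ℝ)..s, (s - r) ^ (1 - β - 1) * we r := by
      rw [← intervalIntegral.integral_const_mul]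
      refine intervalIntegral.integral_congr fun s hs => ?_
      rw [uIcc_of_le ht0] at hs
      have hsI : s ∈ Icc (0:ℝ) t₁ := ⟨hs.1, hs.2.trans ht.2⟩
      have hGs : G s = (1 / Real.Gamma (1 - β)) *
          ∫ r in (0:ℝ)..s, (s - r) ^ (1 - β - 1) * we r := by
        rw [hG s]
        congr 1
        refine intervalIntegral.integral_congr fun r hr => ?_
        rw [uIcc_of_le hsI.1] at hr
        rw [show -β = 1 - β - 1 by ring, hweeq r ⟨hr.1, hr.2.trans hsI.2⟩]
      rw [hGs]; ring
    have eq2 : ∫ s in (0:ℝ)..t, (t - s) ^ (β - 1) * G s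
        = ∫ s in (0:ℝ)..t, (t - s) ^ (β - 1) * ∫ r in (0:ℝ)..s, fe r := by
      refine intervalIntegral.integral_congr fun s hs => ?_
      rw [uIcc_of_le ht0] at hs
      rw [hGeq s ⟨hs.1, hs.2.trans ht.2⟩]
    have eq3 : ∫ s in (0:ℝ)..t, h s
        = (1 / Real.Gamma β) *
          ∫ s in (0:ℝ)..t, ∫ r in (0:ℝ)..s, (s - r) ^ (β - 1) * fe r := by
      rw [← intervalIntegral.integral_const_mul]
    have e5 : Real.Gamma (1 - β) * (∫ s in (0:ℝ)..t, (t - s) ^ (β - 1) * G s)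
        = Real.Gamma β * Real.Gamma (1 - β) * ∫ r in (0:ℝ)..t, we r := by
      rw [eq1, E1]
      field_simp
    have e6 : (∫ s in (0:ℝ)..t, (t - s) ^ (β - 1) * G s)
        = Real.Gamma β / Real.Gamma (β + 1) * ∫ r in (0:ℝ)..t, (t - r) ^ β * fe r :=
      eq2.trans E2
    have e7 : Real.Gamma β * Real.Gamma (1 - β) * (∫ r in (0:ℝ)..t, we r)
        = Real.Gamma (1 - β) *
          (Real.Gamma β / Real.Gamma (β + 1) * ∫ r in (0:ℝ)..t, (t - r) ^ β * fe r) := by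
      rw [← e5, e6]
    have e7' : Real.Gamma β * (∫ r in (0:ℝ)..t, we r)
        = Real.Gamma β / Real.Gamma (β + 1) * ∫ r in (0:ℝ)..t, (t - r) ^ β * fe r := by
      apply mul_left_cancel₀ hΓβ'.ne'
      calc Real.Gamma (1 - β) * (Real.Gamma β * ∫ r in (0:ℝ)..t, we r)
          = Real.Gamma β * Real.Gamma (1 - β) * ∫ r in (0:ℝ)..t, we r := by ring
        _ = _ := e7
    have e8 : (∫ r in (0:ℝ)..t, we r)
        = 1 / Real.Gamma (β + 1) * ∫ r in (0:ℝ)..t, (t - r) ^ β * fe r := by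
      apply mul_left_cancel₀ hΓβ.ne'
      rw [e7']; ring
    have e9 : (∫ s in (0:ℝ)..t, h s)
        = 1 / Real.Gamma (β + 1) * ∫ r in (0:ℝ)..t, (t - r) ^ β * fe r := by
      rw [eq3, E3]
      apply mul_left_cancel₀ hΓβ.ne'
      rw [← mul_assoc, mul_one_div, div_self hΓβ.ne', one_mul]
      ring
    rw [e8, e9]
  -- we = h on [0,t₁]
  have hC : ∀ x ∈ Icc (0:ℝ) t₁, we x = h x := by
    intro x hx
    haveI : Fact (x ∈ Icc (0:ℝ) t₁) := ⟨hx⟩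
    have hwint : IntervalIntegrable we volume 0 x := hwecont.intervalIntegrable _ _
    have hhsub : Icc (0:ℝ) t₁ ⊆ Ici 0 := fun z hz => hz.1
    have hhint : IntervalIntegrable h volume 0 x := by
      apply ContinuousOn.intervalIntegrable
      refine hhcont.mono ?_
      rw [uIcc_of_le hx.1]
      exact fun z hz => hz.1
    have d1 : HasDerivWithinAt (fun u => ∫ s in (0:ℝ)..u, we s) (we x) (Icc 0 t₁) x := by
      apply intervalIntegral.integral_hasDerivWithinAt_right hwint
        ⟨Icc 0 t₁, self_mem_nhdsWithin, hwecont.aestronglyMeasurable.restrict⟩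
      exact hwecont.continuousAt.continuousWithinAt
    have d2 : HasDerivWithinAt (fun u => ∫ s in (0:ℝ)..u, h s) (h x) (Icc 0 t₁) x := by
      apply intervalIntegral.integral_hasDerivWithinAt_right hhint
        ⟨Icc 0 t₁, self_mem_nhdsWithin,
          (hhcont.mono hhsub).aestronglyMeasurable measurableSet_Icc⟩
      exact ((hhcont x hx.1).mono hhsub)
    have u1 := d1.derivWithin ((uniqueDiffOn_Icc ht₁) x hx)
    have u2 := d2.derivWithin ((uniqueDiffOn_Icc ht₁) x hx)
    have u3 : derivWithin (fun u => ∫ s in (0:ℝ)..u, we s) (Icc 0 t₁) x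
        = derivWithin (fun u => ∫ s in (0:ℝ)..u, h s) (Icc 0 t₁) x :=
      derivWithin_congr (fun u hu => key u hu) (key x hx)
    rw [← u1, u3, u2]
  -- φ_q(h) = v on [0,t₁]
  have hveq : ∀ s ∈ Icc (0:ℝ) t₁, phiLap q (h s) = v s := by
    intro s hs
    rw [← hC s hs, hweeq s hs, hwv s hs, phiLap_inv hp hpq]
  -- final assembly
  intro t ht
  have main1 : (∫ s in (0:ℝ)..t, (t - s) ^ (α - 1) *
        phiLap q ((1 / Real.Gamma β) * ∫ r in (0:ℝ)..s, (s - r) ^ (β - 1) *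
          ((2 * lam * P r + Q r) * y r)))
      = ∫ s in (0:ℝ)..t, (t - s) ^ (α - 1) *
          ((1 / Real.Gamma (2 - α)) * ∫ r in (0:ℝ)..s, (s - r) ^ (2 - α - 1) * ye r) := by
    refine intervalIntegral.integral_congr fun s hs => ?_
    rw [uIcc_of_le ht.1] at hs
    have hsI : s ∈ Icc (0:ℝ) t₁ := ⟨hs.1, hs.2.trans ht.2⟩
    have hinner : (1 / Real.Gamma β) * (∫ r in (0:ℝ)..s, (s - r) ^ (β - 1) *
        ((2 * lam * P r + Q r) * y r)) = h s := by
      rw [hh]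
      congr 1
      refine intervalIntegral.integral_congr fun r hr => ?_
      rw [uIcc_of_le hsI.1] at hr
      rw [hfeeq r ⟨hr.1, hr.2.trans hsI.2⟩]
    rw [hinner, hveq s hsI, hv]
  have main2 : (∫ s in (0:ℝ)..t, (t - s) ^ (α - 1) *
        ((1 / Real.Gamma (2 - α)) * ∫ r in (0:ℝ)..s, (s - r) ^ (2 - α - 1) * ye r))
      = (1 / Real.Gamma (2 - α)) * ∫ s in (0:ℝ)..t, (t - s) ^ (α - 1) *
          ∫ r in (0:ℝ)..s, (s - r) ^ (2 - α - 1) * ye r := by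
    rw [← intervalIntegral.integral_const_mul]
    exact intervalIntegral.integral_congr fun s _ => by ring
  have E4 := auxE (by linarith : (0:ℝ) < α) (by linarith : (0:ℝ) < 2 - α) hyecont ht.1
  rw [show α + (2 - α) = 2 by ring, hΓ2, div_one, show (2:ℝ) - 1 = 1 by norm_num] at E4
  simp only [Real.rpow_one] at E4
  have main3 : (∫ r in (0:ℝ)..t, (t - r) * ye r) = ∫ r in (0:ℝ)..t, (t - r) * y'' r := by
    refine intervalIntegral.integral_congr fun r hr => ?_
    rw [uIcc_of_le ht.1] at hr
    rw [hyeeq r ⟨hr.1, hr.2.trans ht.2⟩]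
  have main4 : (∫ r in (0:ℝ)..t, (t - r) * y'' r) = y t - y 0 - y' 0 * t := by
    have hsub : Icc (0:ℝ) t ⊆ Icc 0 t₁ := Icc_subset_Icc le_rfl ht.2
    have hcontΨ : ContinuousOn (fun r => (t - r) * y' r + y r) (Icc 0 t) :=
      (((continuous_const.sub continuous_id).continuousOn).mul
        (hy'cont.mono hsub)).add (hycont.mono hsub)
    have hderivΨ : ∀ z ∈ Ioo (0:ℝ) t,
        HasDerivWithinAt (fun r => (t - r) * y' r + y r) ((t - z) * y'' z) (Ioi z) z := by
      intro z hz
      have hz1 : z ∈ Icc (0:ℝ) t₁ := ⟨hz.1.le, hz.2.le.trans ht.2⟩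
      have hmem : Icc (0:ℝ) t₁ ∈ 𝓝 z := Icc_mem_nhds hz.1 (lt_of_lt_of_le hz.2 ht.2)
      have hyz : HasDerivAt y (y' z) z := (hy z hz1).hasDerivAt hmem
      have hy'z : HasDerivAt y' (y'' z) z := (hy' z hz1).hasDerivAt hmem
      have hΨ : HasDerivAt (fun r => (t - r) * y' r + y r)
          ((-1) * y' z + (t - z) * y'' z + y' z) z := by
        have hid : HasDerivAt (fun r : ℝ => t - r) (-1) z := by
          simpa using (hasDerivAt_id z).const_sub t
        exact (hid.mul hy'z).add hyz
      have : (-1) * y' z + (t - z) * y'' z + y' z = (t - z) * y'' z := by ring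
      rw [this] at hΨ
      exact hΨ.hasDerivWithinAt
    have hint2 : IntervalIntegrable (fun r => (t - r) * y'' r) volume 0 t := by
      apply ContinuousOn.intervalIntegrable
      rw [uIcc_of_le ht.1]
      exact ((continuous_const.sub continuous_id).continuousOn).mul (hy''.mono hsub)
    have := intervalIntegral.integral_eq_sub_of_hasDeriv_right_of_le ht.1 hcontΨ hderivΨ hint2
    rw [this]; ring
  rw [main1, main2, E4, main3, main4]
  field_simp
  ring
end
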